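/- arXiv:1601.04326 — 4 statements merged into one kernel-verified Lean document; each statement's English description precedes it below -/
import Mathlib

section
/- Let V be a finite-dimensional complex vector space with a real structure τ, and let A, B be complex subspaces of V with dim A = dim B. Then A and B lie in the same GL(V, ℝ)-orbit (orbit of the group of invertible operators commuting with τ) on the Grassmannian if and only if dim(A ∩ τ(A)) = dim(B ∩ τ(B)). -/
open Module Submodule

noncomputable section

instance : RingHomSurjective (starRingEnd ℂ) :=
  ⟨fun x => ⟨star x, by simp⟩⟩

variable {V : Type} [AddCommGroup V] [Module ℂ V]

/-- A real structure on a complex vector space is an antilinear involution. -/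
def IsRealStructure (τ : V →ₗ⋆[ℂ] V) : Prop :=
  ∀ v, τ (τ v) = v

namespace RSaux

variable (τ : V →ₗ⋆[ℂ] V)

lemma tau_real_smul (r : ℝ) (v : V) : τ (r • v) = r • τ v := by
  rw [← Complex.coe_smul, ← Complex.coe_smul, map_smulₛₗ, Complex.conj_ofReal]

def fixedSub : Submodule ℝ V where
  carrier := {v | τ v = v}
  add_mem' := by intro a b ha hb; simp only [Set.mem_setOf_eq, map_add] at *; rw [ha, hb]
  zero_mem' := map_zero τ
  smul_mem' := by intro r v hv; simp only [Set.mem_setOf_eq] at *; rw [tau_real_smul, hv]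

lemma mem_fixedSub {v : V} : v ∈ fixedSub τ ↔ τ v = v := Iff.rfl

lemma fixed_linearIndependent {ι : Type} (v : ι → V)
    (hfix : ∀ i, τ (v i) = v i) (h : LinearIndependent ℝ v) : LinearIndependent ℂ v := by
  rw [linearIndependent_iff'] at h ⊢
  intro s g hg i hi
  have h2 : ∑ j ∈ s, (starRingEnd ℂ) (g j) • v j = 0 := by
    have h3 := congrArg τ hg
    rw [map_sum, map_zero] at h3
    simpa only [map_smulₛₗ, hfix] using h3
  have hre : ∀ j ∈ s, (g j).re = 0 := by
    apply h s (fun j => (g j).re)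
    have h4 : (2:ℂ) • ∑ j ∈ s, ((g j).re : ℝ) • v j = 0 := by
      rw [Finset.smul_sum]
      rw [show (0:V) = ∑ j ∈ s, (g j + (starRingEnd ℂ) (g j)) • v j by
        rw [Finset.sum_congr rfl (fun j _ => add_smul _ _ _), Finset.sum_add_distrib, hg, h2,
          add_zero]]
      apply Finset.sum_congr rfl; intro j _
      rw [← Complex.coe_smul, smul_smul, Complex.add_conj]
      norm_num [mul_comm]
    simpa using (smul_eq_zero.mp h4).resolve_left (by norm_num)
  have him : ∀ j ∈ s, (g j).im = 0 := by
    apply h s (fun j => (g j).im)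
    have h4 : ((2:ℂ) * Complex.I) • ∑ j ∈ s, ((g j).im : ℝ) • v j = 0 := by
      rw [Finset.smul_sum]
      rw [show (0:V) = ∑ j ∈ s, (g j - (starRingEnd ℂ) (g j)) • v j by
        rw [Finset.sum_congr rfl (fun j _ => sub_smul _ _ _), Finset.sum_sub_distrib, hg, h2,
          sub_zero]]
      apply Finset.sum_congr rfl; intro j _
      rw [← Complex.coe_smul, smul_smul, Complex.sub_conj]
      push_cast; ring
    have h5 := (smul_eq_zero.mp h4).resolve_left (by simp [Complex.I_ne_zero])
    simpa using h5
  exact Complex.ext (hre i hi) (him i hi)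

variable {τ}

lemma span_fixed_inter (hτ : IsRealStructure τ) (p : Submodule ℂ V) (hp : ∀ v ∈ p, τ v ∈ p) :
    span ℂ ((fixedSub τ ⊓ p.restrictScalars ℝ : Submodule ℝ V) : Set V) = p := by
  apply le_antisymm
  · rw [span_le]
    intro x hx
    exact hx.2
  · intro v hv
    have hu : ((1/2 : ℝ) • (v + τ v)) ∈ (fixedSub τ ⊓ p.restrictScalars ℝ : Submodule ℝ V) := by
      constructor
      · show τ _ = _
        rw [tau_real_smul, map_add, hτ v, add_comm]
      · exact Submodule.smul_mem _ _ (Submodule.add_mem _ hv (hp v hv))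
    have hw : ((-(1/2) : ℝ) • (Complex.I • (v - τ v))) ∈
        (fixedSub τ ⊓ p.restrictScalars ℝ : Submodule ℝ V) := by
      constructor
      · show τ _ = _
        rw [tau_real_smul, map_smulₛₗ, map_sub, hτ v, Complex.conj_I]
        match_scalars <;> (ring_nf; try norm_num [Complex.I_sq])
      · exact Submodule.smul_mem _ _ (Submodule.smul_mem _ _ (Submodule.sub_mem _ hv (hp v hv)))
    have hdec : v = ((1/2 : ℝ) • (v + τ v)) +
        Complex.I • ((-(1/2) : ℝ) • (Complex.I • (v - τ v))) := by
      match_scalars <;> (ring_nf; try norm_num [Complex.I_sq])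
    rw [hdec]
    exact Submodule.add_mem _ (Submodule.subset_span hu)
      (Submodule.smul_mem _ _ (Submodule.subset_span hw))

lemma span_fixed_top (hτ : IsRealStructure τ) : span ℂ ((fixedSub τ : Submodule ℝ V) : Set V) = ⊤ := by
  have := span_fixed_inter hτ ⊤ (fun v _ => trivial)
  simpa using this

/-- An ℝ-basis of the fixed space gives a ℂ-basis of V with the same vectors. -/
lemma exists_complex_basis (hτ : IsRealStructure τ) {ι : Type} (b : Basis ι ℝ ↥(fixedSub τ)) :
    ∃ B : Basis ι ℂ V, ∀ i, (B i : V) = (b i : V) := by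
  set w : ι → V := fun i => (b i : V) with hwdef
  have hw : ∀ i, w i ∈ fixedSub τ := fun i => (b i).2
  have hindR : LinearIndependent ℝ w :=
    b.linearIndependent.map' (fixedSub τ).subtype (Submodule.ker_subtype _)
  have hindC := fixed_linearIndependent τ w hw hindR
  have hspanR : span ℝ (Set.range w) = fixedSub τ := by
    have : Set.range w = (fixedSub τ).subtype '' Set.range b := by
      rw [← Set.range_comp]; rfl
    rw [this, ← Submodule.map_span, b.span_eq, Submodule.map_subtype_top]
  have hspanC : span ℂ (Set.range w) = ⊤ := by
    rw [← top_le_iff, ← span_fixed_top hτ, span_le]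
    intro x hx
    have hx2 : x ∈ span ℝ (Set.range w) := by rw [hspanR]; exact hx
    exact Submodule.span_le_restrictScalars ℝ ℂ (Set.range w) hx2
  exact ⟨Basis.mk hindC (by rw [hspanC]), fun i => Basis.mk_apply _ _ _⟩

variable [FiniteDimensional ℂ V]

lemma finrank_fixed (hτ : IsRealStructure τ) :
    finrank ℝ ↥(fixedSub τ) = finrank ℂ V := by
  obtain ⟨B, hB⟩ := exists_complex_basis hτ (finBasis ℝ ↥(fixedSub τ))
  rw [finrank_eq_card_basis B, Fintype.card_fin]

lemma map_map_tau (hτ : IsRealStructure τ) (p : Submodule ℂ V) :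
    map τ (map τ p) = p := by
  ext x
  constructor
  · rintro ⟨y, ⟨z, hz, rfl⟩, rfl⟩
    rwa [hτ]
  · intro hx
    exact ⟨τ x, ⟨x, hx, rfl⟩, hτ x⟩

lemma finrank_map_tau_le (p : Submodule ℂ V) : finrank ℂ (map τ p) ≤ finrank ℂ p := by
  classical
  set b := finBasis ℂ ↥p
  set u : Fin (finrank ℂ ↥p) → V := fun i => τ ((b i : ↥p) : V) with hu
  have hspan : map τ p = span ℂ (Set.range u) := by
    have hp : p = span ℂ (Set.range (fun i => ((b i : ↥p) : V))) := by
      have : Set.range (fun i => ((b i : ↥p) : V)) = p.subtype '' Set.range b := by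
        rw [← Set.range_comp]; rfl
      rw [this, ← Submodule.map_span, b.span_eq, Submodule.map_subtype_top]
    conv_lhs => rw [hp]
    rw [Submodule.map_span, ← Set.range_comp]
    rfl
  rw [hspan]
  exact (finrank_range_le_card u).trans (by simp)

lemma finrank_map_tau (hτ : IsRealStructure τ) (p : Submodule ℂ V) :
    finrank ℂ (map τ p) = finrank ℂ p := by
  refine le_antisymm (finrank_map_tau_le p) ?_
  conv_lhs => rw [← map_map_tau hτ p]
  exact finrank_map_tau_le _

end RSaux

namespace RSaux2
open RSaux

variable {V : Type} [AddCommGroup V] [Module ℂ V] [FiniteDimensional ℂ V]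
variable {τ : V →ₗ⋆[ℂ] V}

lemma adapted (hτ : IsRealStructure τ) (A : Submodule ℂ V) (c d k : ℕ)
    (hc : finrank ℂ (A ⊓ map τ A : Submodule ℂ V) = c)
    (hd : finrank ℂ A = c + d)
    (hk : finrank ℂ V = c + 2 * d + k) :
    ∃ b : Basis ((Fin c ⊕ Fin d ⊕ Fin d) ⊕ Fin k) ℂ V,
      (∀ i, τ (b i) = b i) ∧
      A = span ℂ ((Set.range fun i : Fin c => b (.inl (.inl i))) ∪
        (Set.range fun j : Fin d => b (.inl (.inr (.inl j))) +
          Complex.I • b (.inl (.inr (.inr j))))) := by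
  classical
  set N : Submodule ℂ V := A ⊓ map τ A with hN
  have hNA : N ≤ A := inf_le_left
  have hNtau : ∀ v ∈ N, τ v ∈ N := by
    rintro v ⟨hvA, hvT⟩
    obtain ⟨w, hw, hwv⟩ := hvT
    constructor
    · show τ v ∈ A
      rw [← hwv, hτ w]; exact hw
    · exact ⟨v, hvA, rfl⟩
  -- the fixed part of N
  set M : Submodule ℝ V := fixedSub τ ⊓ N.restrictScalars ℝ with hM
  have hMspan : span ℂ (M : Set V) = N := span_fixed_inter hτ N hNtau
  set m := finrank ℝ ↥M with hmdef
  set bM := finBasis ℝ ↥M with hbM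
  set e0 : Fin m → V := fun i => ((bM i : ↥M) : V) with he0
  have he0M : ∀ i, e0 i ∈ M := fun i => (bM i).2
  have he0indR : LinearIndependent ℝ e0 :=
    bM.linearIndependent.map' M.subtype (Submodule.ker_subtype _)
  have he0indC : LinearIndependent ℂ e0 :=
    fixed_linearIndependent τ e0 (fun i => (he0M i).1) he0indR
  have hspanE0 : span ℂ (Set.range e0) = N := by
    apply le_antisymm
    · rw [span_le]; rintro x ⟨i, rfl⟩; exact (he0M i).2
    · rw [← hMspan, span_le]
      intro x hx
      have hx2 : x ∈ span ℝ (Set.range e0) := by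
        have hre : Set.range e0 = M.subtype '' Set.range bM := by rw [← Set.range_comp]; rfl
        rw [hre, ← Submodule.map_span, bM.span_eq, Submodule.map_subtype_top]
        exact hx
      exact Submodule.span_le_restrictScalars ℝ ℂ (Set.range e0) hx2
  have hmc : m = c := by
    rw [← hc, ← hspanE0, finrank_span_eq_card he0indC, Fintype.card_fin]
  set e : Fin c → V := e0 ∘ (finCongr hmc.symm) with he
  have heM : ∀ i, e i ∈ M := fun i => he0M _
  have hrange_e : Set.range e = Set.range e0 := by
    rw [he, Set.range_comp, Equiv.range_eq_univ, Set.image_univ]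
  have hspanEe : span ℂ (Set.range e) = N := by rw [hrange_e, hspanE0]
  -- complement of N in A
  set NA' : Submodule ℂ ↥A := N.comap A.subtype with hNA'
  obtain ⟨C, hC⟩ := Submodule.exists_isCompl NA'
  have hrankC : finrank ℂ ↥C = d := by
    have h1 := Submodule.finrank_add_eq_of_isCompl hC
    have h2 : finrank ℂ ↥NA' = finrank ℂ ↥N :=
      (Submodule.comapSubtypeEquivOfLe hNA).finrank_eq
    rw [h2, hc, hd] at h1
    omega
  set bC := finBasis ℂ ↥C with hbC
  set f : Fin d → V := fun j => ((bC (finCongr hrankC.symm j) : ↥A) : V) with hf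
  have hfA : ∀ j, f j ∈ A := fun j => (bC (finCongr hrankC.symm j) : ↥A).2
  have hspanf : span ℂ (Set.range f) = map A.subtype C := by
    have hrf : Set.range f = A.subtype '' (C.subtype '' Set.range (⇑bC)) := by
      have h1 : f = A.subtype ∘ (C.subtype ∘ (⇑bC ∘ (finCongr hrankC.symm))) := rfl
      rw [h1, Set.range_comp, Set.range_comp,
        (finCongr hrankC.symm).surjective.range_comp]
    rw [hrf, ← Submodule.map_span, ← Submodule.map_span, bC.span_eq,
      Submodule.map_subtype_top]
  have hspanEF : span ℂ (Set.range e ∪ Set.range f) = A := by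
    rw [span_union, hspanEe, hspanf]
    have hNm : map A.subtype NA' = N := by
      rw [hNA', Submodule.map_comap_subtype]
      exact inf_eq_right.2 hNA
    rw [← hNm, ← Submodule.map_sup, hC.sup_eq_top, Submodule.map_subtype_top]
  -- real and imaginary parts of f
  set g : Fin d → V := fun j => (1/2 : ℝ) • (f j + τ (f j)) with hgdef
  set h : Fin d → V := fun j => (-(1/2) : ℝ) • (Complex.I • (f j - τ (f j))) with hhdef
  have hgfix : ∀ j, τ (g j) = g j := by
    intro j
    rw [hgdef]
    show τ _ = _
    rw [tau_real_smul, map_add, hτ (f j), add_comm]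
  have hhfix : ∀ j, τ (h j) = h j := by
    intro j
    rw [hhdef]
    show τ _ = _
    rw [tau_real_smul, map_smulₛₗ, map_sub, hτ (f j), Complex.conj_I]
    match_scalars <;> (ring_nf; try norm_num [Complex.I_sq])
  have hf_gh : ∀ j, f j = g j + Complex.I • h j := by
    intro j
    rw [hgdef, hhdef]
    match_scalars <;> (ring_nf; try norm_num [Complex.I_sq])
  have htauf_gh : ∀ j, τ (f j) = g j - Complex.I • h j := by
    intro j
    rw [hgdef, hhdef]
    match_scalars <;> (ring_nf; try norm_num [Complex.I_sq])
  -- the adapted independent family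
  set E : (Fin c ⊕ Fin d ⊕ Fin d) → V := Sum.elim e (Sum.elim g h) with hE
  have hEfix : ∀ i, τ (E i) = E i := by
    rintro (i | j | j)
    · exact (heM i).1
    · exact hgfix j
    · exact hhfix j
  have hspanE : span ℂ (Set.range E) = A ⊔ map τ A := by
    rw [hE, Set.Sum.elim_range, Set.Sum.elim_range]
    apply le_antisymm
    · rw [span_le]
      rintro x (⟨i, rfl⟩ | (⟨j, rfl⟩ | ⟨j, rfl⟩))
      · exact Submodule.mem_sup_left (hNA (heM i).2)
      · exact Submodule.smul_of_tower_mem _ _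
          (Submodule.add_mem _ (Submodule.mem_sup_left (hfA j))
            (Submodule.mem_sup_right ⟨f j, hfA j, rfl⟩))
      · exact Submodule.smul_of_tower_mem _ _ (Submodule.smul_mem _ _
          (Submodule.sub_mem _ (Submodule.mem_sup_left (hfA j))
            (Submodule.mem_sup_right ⟨f j, hfA j, rfl⟩)))
    · apply sup_le
      · conv_lhs => rw [← hspanEF]
        rw [span_le]
        rintro x (⟨i, rfl⟩ | ⟨j, rfl⟩)
        · exact subset_span (Or.inl ⟨i, rfl⟩)
        · rw [hf_gh j]
          exact Submodule.add_mem _ (subset_span (Or.inr (Or.inl ⟨j, rfl⟩)))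
            (Submodule.smul_mem _ _ (subset_span (Or.inr (Or.inr ⟨j, rfl⟩))))
      · conv_lhs => rw [← hspanEF]
        rw [Submodule.map_span, span_le]
        rintro x ⟨y, hy, rfl⟩
        rcases hy with ⟨i, rfl⟩ | ⟨j, rfl⟩
        · rw [(heM i).1]
          exact subset_span (Or.inl ⟨i, rfl⟩)
        · rw [htauf_gh j]
          exact Submodule.sub_mem _ (subset_span (Or.inr (Or.inl ⟨j, rfl⟩)))
            (Submodule.smul_mem _ _ (subset_span (Or.inr (Or.inr ⟨j, rfl⟩))))
  have hranksup : finrank ℂ ↥(A ⊔ map τ A) = c + 2 * d := by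
    have h1 := Submodule.finrank_sup_add_finrank_inf_eq A (map τ A)
    rw [finrank_map_tau hτ] at h1
    rw [hd] at h1
    have h2 : finrank ℂ ↥(A ⊓ map τ A) = c := hc
    rw [h2] at h1
    omega
  have hEind : LinearIndependent ℂ E := by
    rw [linearIndependent_iff_card_eq_finrank_span]
    show _ = finrank ℂ ↥(span ℂ (Set.range E))
    rw [hspanE, hranksup]
    simp only [Fintype.card_sum, Fintype.card_fin]
    omega
  -- extend to a real basis of the fixed subspace
  set E' : (Fin c ⊕ Fin d ⊕ Fin d) → ↥(fixedSub τ) := fun i => ⟨E i, hEfix i⟩ with hE'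
  have hcoeE' : (fixedSub τ).subtype ∘ E' = E := rfl
  have hE'ind : LinearIndependent ℝ E' := by
    apply LinearIndependent.of_comp (fixedSub τ).subtype
    rw [hcoeE']
    exact hEind.restrict_scalars (smul_left_injective ℝ one_ne_zero)
  set W : Submodule ℝ ↥(fixedSub τ) := span ℝ (Set.range E') with hW
  set bW : Basis (Fin c ⊕ Fin d ⊕ Fin d) ℝ ↥W := Basis.span hE'ind with hbW
  obtain ⟨W', hW'⟩ := W.exists_isCompl
  set bW' := finBasis ℝ ↥W' with hbW'
  have hk' : finrank ℝ ↥W' = k := by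
    have h1 := Submodule.finrank_add_eq_of_isCompl hW'
    have h2 : finrank ℝ ↥W = c + 2 * d := by
      rw [hW, finrank_span_eq_card hE'ind]
      simp only [Fintype.card_sum, Fintype.card_fin]
      omega
    rw [h2, finrank_fixed hτ, hk] at h1
    omega
  set bF : Basis ((Fin c ⊕ Fin d ⊕ Fin d) ⊕ Fin k) ℝ ↥(fixedSub τ) :=
    ((bW.prod bW').map (Submodule.prodEquivOfIsCompl _ _ hW')).reindex
      (Equiv.sumCongr (Equiv.refl _) (finCongr hk')) with hbF
  have hbF_inl : ∀ i, (bF (Sum.inl i) : V) = E i := by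
    intro i
    rw [hbF, Basis.reindex_apply]
    have h1 : (Equiv.sumCongr (Equiv.refl (Fin c ⊕ Fin d ⊕ Fin d)) (finCongr hk')).symm
        (Sum.inl i) = Sum.inl i := rfl
    rw [h1, Basis.map_apply]
    have h2 : (bW.prod bW') (Sum.inl i) = (bW i, (0 : ↥W')) :=
      Prod.ext (Basis.prod_apply_inl_fst _ _ _) (Basis.prod_apply_inl_snd _ _ _)
    rw [h2]
    have h4 : (Submodule.prodEquivOfIsCompl W W' hW') (bW i, (0 : ↥W')) = E' i := by
      rw [Submodule.coe_prodEquivOfIsCompl' W W' hW']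
      simp only [ZeroMemClass.coe_zero, add_zero]
      rw [hbW, Basis.span_apply]
    rw [h4]
  obtain ⟨B, hB⟩ := exists_complex_basis hτ bF
  refine ⟨B, fun i => ?_, ?_⟩
  · rw [hB i]
    exact (bF i).2
  · have hs1 : (fun i : Fin c => B (Sum.inl (Sum.inl i))) = e := by
      funext i
      rw [hB, hbF_inl]
      rfl
    have hs2 : (fun j : Fin d => B (Sum.inl (Sum.inr (Sum.inl j))) +
        Complex.I • B (Sum.inl (Sum.inr (Sum.inr j)))) = f := by
      funext j
      rw [hB, hB, hbF_inl, hbF_inl]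
      exact (hf_gh j).symm
    rw [hs1, hs2, hspanEF]

end RSaux2

open RSaux RSaux2 in
theorem same_GLR_orbit_iff_dim_inter_tau
    [FiniteDimensional ℂ V] (τ : V →ₗ⋆[ℂ] V) (hτ : IsRealStructure τ)
    (A B : Submodule ℂ V) (hdim : finrank ℂ A = finrank ℂ B) :
    (∃ φ : V ≃ₗ[ℂ] V, (∀ v, φ (τ v) = τ (φ v)) ∧
        Submodule.map (φ : V →ₗ[ℂ] V) A = B) ↔
      finrank ℂ (A ⊓ Submodule.map τ A : Submodule ℂ V) =
        finrank ℂ (B ⊓ Submodule.map τ B : Submodule ℂ V) := by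
  constructor
  · rintro ⟨φ, hcomm, hmap⟩
    have h1 : Submodule.map (φ : V →ₗ[ℂ] V) (A ⊓ Submodule.map τ A) =
        B ⊓ Submodule.map τ B := by
      rw [Submodule.map_inf (φ : V →ₗ[ℂ] V) φ.injective, hmap]
      congr 1
      rw [← hmap]
      ext x
      constructor
      · rintro ⟨y, ⟨z, hz, rfl⟩, rfl⟩
        exact ⟨φ z, ⟨z, hz, rfl⟩, (hcomm z).symm⟩
      · rintro ⟨y, ⟨z, hz, rfl⟩, rfl⟩
        exact ⟨τ z, ⟨z, hz, rfl⟩, hcomm z⟩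
    rw [← h1, LinearEquiv.finrank_map_eq]
  · intro hfr
    set n := finrank ℂ V with hn
    set c := finrank ℂ (A ⊓ Submodule.map τ A : Submodule ℂ V) with hcdef
    have hcA : c ≤ finrank ℂ A := Submodule.finrank_mono inf_le_left
    set d := finrank ℂ A - c with hddef
    have hd : finrank ℂ A = c + d := by omega
    have hsupA : finrank ℂ ↥(A ⊔ Submodule.map τ A) + c =
        finrank ℂ A + finrank ℂ A := by
      have h2 := Submodule.finrank_sup_add_finrank_inf_eq A (Submodule.map τ A)
      rw [RSaux.finrank_map_tau hτ] at h2
      rw [← hcdef] at h2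
      exact h2
    have hsup_le : finrank ℂ ↥(A ⊔ Submodule.map τ A) ≤ n := Submodule.finrank_le _
    set k := n - (c + 2*d) with hkdef
    have hk : n = c + 2*d + k := by omega
    obtain ⟨bA, hAfix, hAspan⟩ := RSaux2.adapted hτ A c d k rfl hd hk
    obtain ⟨bB, hBfix, hBspan⟩ := RSaux2.adapted hτ B c d k hfr.symm (by omega) hk
    set φ := bA.equiv bB (Equiv.refl _) with hφ
    have hφap : ∀ i, φ (bA i) = bB i := by
      intro i
      rw [hφ, Basis.equiv_apply, Equiv.refl_apply]
    refine ⟨φ, ?_, ?_⟩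
    · have heq : (τ.comp (φ : V →ₗ[ℂ] V)) = ((φ : V →ₗ[ℂ] V).comp τ) := by
        apply bA.ext
        intro i
        simp only [LinearMap.coe_comp, Function.comp_apply, LinearEquiv.coe_coe]
        rw [hφap i, hAfix i, hφap i, hBfix i]
      intro v
      exact (LinearMap.congr_fun heq v).symm
    · rw [hAspan, hBspan, Submodule.map_span]
      congr 1
      rw [Set.image_union]
      congr 1
      · rw [← Set.range_comp]
        apply congrArg
        funext i
        simp only [Function.comp_apply, LinearEquiv.coe_coe]
        exact hφap _
      · rw [← Set.range_comp]
        apply congrArg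
        funext j
        simp only [Function.comp_apply, LinearEquiv.coe_coe, map_add, map_smul]
        rw [hφap, hφap]
end
end

section
/- Let V be a complex vector space of odd dimension 2n−1 with a real structure τ. The number of orbits of SL(V, ℝ) (determinant-1 operators commuting with τ) on the Grassmannian Gr(k, V), for k ≤ n−1, equals k+1. -/
open Module Submodule

noncomputable section

variable {V : Type} [AddCommGroup V] [Module ℂ V]

/-- Two `k`-dimensional subspaces lie in the same orbit of `SL(V, ℝ)`, the group of
determinant-one operators commuting with the real structure `τ`. -/
def SameSLROrbit (τ : V →ₗ⋆[ℂ] V) (k : ℕ)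
    (A B : {U : Submodule ℂ V // Module.finrank ℂ U = k}) : Prop :=
  ∃ φ : V ≃ₗ[ℂ] V, (∀ v, φ (τ v) = τ (φ v)) ∧
    LinearMap.det (φ : V →ₗ[ℂ] V) = 1 ∧
    Submodule.map (φ : V →ₗ[ℂ] V) A.1 = B.1

namespace SLRAux

variable {τ : V →ₗ⋆[ℂ] V}

/-- Pad a `Fin N`-indexed family to a `ℕ`-indexed one. -/
def pad {N : ℕ} (b : Fin N → V) : ℕ → V := fun j => if h : j < N then b ⟨j, h⟩ else 0

lemma pad_lt {N : ℕ} (b : Fin N → V) {j : ℕ} (h : j < N) : pad b j = b ⟨j, h⟩ := dif_pos h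

/-- The standard model family for the invariant `d`. -/
def modelFam (c : ℕ → V) (k d : ℕ) : Fin k → V := fun i =>
  if (i : ℕ) < d then c i else c i + Complex.I • c ((i : ℕ) + (k - d))

/-- The standard model subspace for the invariant `d`. -/
def modelSpan (c : ℕ → V) (k d : ℕ) : Submodule ℂ V :=
  span ℂ (Set.range (modelFam c k d))

lemma tau_smul (τ : V →ₗ⋆[ℂ] V) (a : ℂ) (v : V) :
    τ (a • v) = (starRingEnd ℂ) a • τ v := τ.map_smulₛₗ a v

lemma map_map_self (hτ : IsRealStructure τ) (A : Submodule ℂ V) :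
    Submodule.map τ (Submodule.map τ A) = A := by
  ext x
  simp only [Submodule.mem_map]
  constructor
  · rintro ⟨y, ⟨a, ha, rfl⟩, rfl⟩
    rwa [hτ a]
  · intro hx
    exact ⟨τ x, ⟨x, hx, rfl⟩, hτ x⟩

lemma inf_tau_stable (hτ : IsRealStructure τ) (A : Submodule ℂ V) :
    Submodule.map τ (A ⊓ Submodule.map τ A) = A ⊓ Submodule.map τ A := by
  have h1 : Submodule.map τ (A ⊓ Submodule.map τ A) ≤ A ⊓ Submodule.map τ A := by
    refine le_trans (Submodule.map_inf_le τ) ?_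
    rw [map_map_self hτ]
    exact le_inf inf_le_right inf_le_left
  have h2 := Submodule.map_mono (f := τ) h1
  rw [map_map_self hτ] at h2
  exact le_antisymm h1 h2

/-- real vectors of a `τ`-stable subspace span it over `ℂ`. -/
lemma span_reals (hτ : IsRealStructure τ) (U : Submodule ℂ V)
    (hU : Submodule.map τ U = U) :
    span ℂ {v : V | v ∈ U ∧ τ v = v} = U := by
  apply le_antisymm
  · rw [span_le]
    rintro v ⟨hv, -⟩
    exact hv
  · intro v hv
    have hτv : τ v ∈ U := by
      rw [← hU]
      exact Submodule.mem_map_of_mem hv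
    have hIhalf : Complex.I * (-(Complex.I) / 2) = (2 : ℂ)⁻¹ := by
      linear_combination (-(1 : ℂ) / 2) * Complex.I_mul_I
    have hconj2' : (starRingEnd ℂ) (2 : ℂ) = 2 := by
      simp [Complex.ext_iff]
    have hconj2 : (starRingEnd ℂ) ((2 : ℂ)⁻¹) = (2 : ℂ)⁻¹ := by
      rw [map_inv₀, hconj2']
    have hconjI : (starRingEnd ℂ) (-(Complex.I) / 2) = Complex.I / 2 := by
      rw [map_div₀, map_neg, Complex.conj_I, neg_neg, hconj2']
    have ha : ((2 : ℂ)⁻¹ • (v + τ v)) ∈ {v : V | v ∈ U ∧ τ v = v} := by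
      refine ⟨Submodule.smul_mem _ _ (Submodule.add_mem _ hv hτv), ?_⟩
      rw [tau_smul, map_add, hτ v, hconj2]
      module
    have hb : ((-(Complex.I) / 2) • (v - τ v)) ∈ {v : V | v ∈ U ∧ τ v = v} := by
      refine ⟨Submodule.smul_mem _ _ (Submodule.sub_mem _ hv hτv), ?_⟩
      rw [tau_smul, map_sub, hτ v, hconjI]
      module
    have hdec : v = ((2 : ℂ)⁻¹ • (v + τ v)) + Complex.I • ((-(Complex.I) / 2) • (v - τ v)) := by
      rw [smul_smul, hIhalf]
      module
    rw [hdec]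
    exact Submodule.add_mem _ (subset_span ha) (Submodule.smul_mem _ _ (subset_span hb))

lemma gext_aux [FiniteDimensional ℂ V] (U : Submodule ℂ V) (S : Set V) (hS : span ℂ S = U)
    {r : ℕ} (hr : finrank ℂ U = r) :
    ∀ j m (hmj : m + j = r) (u : Fin m → V), LinearIndependent ℂ u → (∀ i, u i ∈ U) →
    ∃ c : Fin r → V, LinearIndependent ℂ c ∧ span ℂ (Set.range c) = U ∧
      (∀ i : Fin m, c (Fin.castLE (by omega) i) = u i) ∧
      (∀ i : Fin r, m ≤ (i : ℕ) → c i ∈ S) := by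
  intro j
  induction j with
  | zero =>
    intro m hmj u hind hu
    have hm : m = r := by omega
    subst hm
    have hle : span ℂ (Set.range u) ≤ U := span_le.2 (Set.range_subset_iff.2 hu)
    refine ⟨u, hind, ?_, fun i => rfl, fun i hi => absurd i.isLt (by omega)⟩
    refine Submodule.eq_of_le_of_finrank_le hle ?_
    rw [finrank_span_eq_card hind, Fintype.card_fin, hr]
  | succ j ih =>
    intro m hmj u hind hu
    have hne : ¬ (S ⊆ (span ℂ (Set.range u) : Set V)) := by
      intro hsub
      have hle : U ≤ span ℂ (Set.range u) := by
        rw [← hS]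
        exact span_le.2 hsub
      have h1 : finrank ℂ U ≤ finrank ℂ (span ℂ (Set.range u)) :=
        Submodule.finrank_mono hle
      rw [finrank_span_eq_card hind, Fintype.card_fin, hr] at h1
      omega
    obtain ⟨x, hxS, hxns⟩ := Set.not_subset.1 hne
    have hxU : x ∈ U := by
      rw [← hS]
      exact subset_span hxS
    have hind' : LinearIndependent ℂ (Fin.snoc u x : Fin (m + 1) → V) :=
      linearIndependent_fin_snoc.2 ⟨hind, hxns⟩
    have hu' : ∀ i, (Fin.snoc u x : Fin (m + 1) → V) i ∈ U := by
      intro i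
      induction i using Fin.lastCases with
      | last => simpa [Fin.snoc_last] using hxU
      | cast i => simpa [Fin.snoc_castSucc] using hu i
    obtain ⟨c, hc1, hc2, hc3, hc4⟩ := ih (m + 1) (by omega) _ hind' hu'
    refine ⟨c, hc1, hc2, ?_, ?_⟩
    · intro i
      have h2 := hc3 (Fin.castSucc i)
      rw [Fin.snoc_castSucc] at h2
      rw [← h2]
      congr 1
    · intro i hi
      rcases Nat.lt_or_ge (i : ℕ) (m + 1) with h | h
      · have hi' : (i : ℕ) = m := by omega
        have hieq : i = Fin.castLE (by omega) (Fin.last m) := Fin.ext (by simp [hi'])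
        rw [hieq, hc3 (Fin.last m), Fin.snoc_last]
        exact hxS
      · exact hc4 i h

/-- extension of independent families using vectors from a spanning set. -/
lemma gext [FiniteDimensional ℂ V] (U : Submodule ℂ V) (S : Set V) (hS : span ℂ S = U)
    {m r : ℕ} (hmr : m ≤ r) (hr : finrank ℂ U = r) (u : Fin m → V)
    (hind : LinearIndependent ℂ u) (hu : ∀ i, u i ∈ U) :
    ∃ c : Fin r → V, LinearIndependent ℂ c ∧
      span ℂ (Set.range c) = U ∧ (∀ i : Fin m, c (Fin.castLE hmr i) = u i) ∧
      (∀ i : Fin r, m ≤ (i : ℕ) → c i ∈ S) := by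
  obtain ⟨c, h1, h2, h3, h4⟩ := gext_aux U S hS hr (r - m) m (by omega) u hind hu
  exact ⟨c, h1, h2, fun i => (by rw [← h3 i]) , h4⟩

/-- a linear map sending a real basis to real vectors commutes with `τ`. -/
lemma comm_of_real_basis (hτ : IsRealStructure τ) {ι : Type*} (b : Basis ι ℂ V)
    (hb : ∀ i, τ (b i) = b i) (φ : V →ₗ[ℂ] V) (hφ : ∀ i, τ (φ (b i)) = φ (b i)) :
    ∀ v, φ (τ v) = τ (φ v) := by
  intro v
  have hv : v ∈ span ℂ (Set.range b) := by rw [b.span_eq]; trivial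
  induction hv using Submodule.span_induction with
  | mem x hx =>
    obtain ⟨i, rfl⟩ := hx
    rw [hb i, hφ i]
  | zero => simp
  | add x y _ _ hx hy => simp only [map_add, hx, hy]
  | smul a x _ hx => rw [tau_smul, map_smul, hx, map_smul, tau_smul]

/-- coordinates of a real vector in a real basis are real. -/
lemma repr_real {ι : Type*} [Fintype ι] (b : Basis ι ℂ V)
    (hb : ∀ i, τ (b i) = b i) {v : V} (hv : τ v = v) (i : ι) :
    (starRingEnd ℂ) (b.repr v i) = b.repr v i := by
  have hrepr : v = ∑ j, (starRingEnd ℂ) (b.repr v j) • b j := by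
    conv_lhs => rw [← hv]
    conv_lhs => rw [← b.sum_repr v]
    rw [map_sum]
    refine Finset.sum_congr rfl fun j _ => ?_
    rw [tau_smul, hb]
  have h2 := b.repr_sum_self (fun j => (starRingEnd ℂ) (b.repr v j))
  rw [← hrepr] at h2
  exact (congrFun h2 i).symm

/-- `τ` preserves linear independence. -/
lemma indep_tau (hτ : IsRealStructure τ) {ι : Type*} {v : ι → V}
    (hv : LinearIndependent ℂ v) : LinearIndependent ℂ (fun i => τ (v i)) := by
  have := hv.map_of_injective_injective (starRingEnd ℂ) τ.toAddMonoidHom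
    (fun r hr => by simpa using hr)
    (fun m hm => by
      have hm' : τ m = 0 := hm
      rw [← hτ m, hm', map_zero])
    (fun r m => by simp [tau_smul])
  exact this

/-- `τ` preserves the dimension of subspaces. -/
lemma finrank_map_tau [FiniteDimensional ℂ V] (hτ : IsRealStructure τ) (A : Submodule ℂ V) :
    finrank ℂ (Submodule.map τ A) = finrank ℂ A := by
  classical
  let bA := Module.finBasis ℂ A
  set v : Fin (finrank ℂ A) → V := fun i => (bA i : V) with hv
  have hvind : LinearIndependent ℂ v := bA.linearIndependent.map' A.subtype (ker_subtype A)
  have hvspan : span ℂ (Set.range v) = A := by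
    have h := congrArg (Submodule.map A.subtype) bA.span_eq
    rwa [Submodule.map_span, Submodule.map_top, range_subtype, ← Set.range_comp] at h
  have hτA : Submodule.map τ A = span ℂ (Set.range fun i => τ (v i)) := by
    conv_lhs => rw [← hvspan]
    rw [Submodule.map_span, ← Set.range_comp]
    rfl
  rw [hτA, finrank_span_eq_card (indep_tau hτ hvind), Fintype.card_fin]

section Model

variable {N : ℕ}

lemma model_indep_aux (b : Basis (Fin N) ℂ V) (k d : ℕ) (z : ℂ)
    (hdk : d ≤ k) (hkN : 2 * k - d ≤ N) :
    LinearIndependent ℂ (fun i : Fin k =>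
      if (i : ℕ) < d then pad (⇑b) (i : ℕ)
      else pad (⇑b) (i : ℕ) + z • pad (⇑b) ((i : ℕ) + (k - d))) := by
  classical
  set P : V →ₗ[ℂ] (Fin k → ℂ) := LinearMap.pi (fun i : Fin k =>
      (Finsupp.lapply (⟨(i : ℕ), by omega⟩ : Fin N)).comp
        (b.repr : V →ₗ[ℂ] (Fin N →₀ ℂ))) with hP
  apply LinearIndependent.of_comp P
  have hcomp : (⇑P ∘ fun i : Fin k =>
      if (i : ℕ) < d then pad (⇑b) (i : ℕ)
      else pad (⇑b) (i : ℕ) + z • pad (⇑b) ((i : ℕ) + (k - d)))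
      = fun i => Pi.single i (1 : ℂ) := by
    funext i j
    have hik : (i : ℕ) < k := i.isLt
    have hjk : (j : ℕ) < k := j.isLt
    have hiN : (i : ℕ) < N := by omega
    simp only [Function.comp_apply, hP, LinearMap.pi_apply, LinearMap.comp_apply,
      LinearEquiv.coe_coe, Finsupp.lapply_apply]
    by_cases hid : (i : ℕ) < d
    · rw [if_pos hid, pad_lt _ hiN, b.repr_self]
      simp only [Finsupp.single_apply, Pi.single_apply, Fin.ext_iff]
      by_cases h : (i : ℕ) = (j : ℕ)
      · simp [h]
      · have h' : ¬ ((j : ℕ) = (i : ℕ)) := by omega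
        simp [h, h']
    · have hi2 : (i : ℕ) + (k - d) < N := by omega
      have hnej : ¬ ((i : ℕ) + (k - d) = (j : ℕ)) := by omega
      rw [if_neg hid, pad_lt _ hiN, pad_lt _ hi2, map_add, map_smul, b.repr_self, b.repr_self]
      simp only [Finsupp.add_apply, Finsupp.smul_apply, Finsupp.single_apply, Fin.ext_iff,
        Pi.single_apply]
      rw [if_neg hnej]
      by_cases h : (i : ℕ) = (j : ℕ)
      · simp [h]
      · have h' : ¬ ((j : ℕ) = (i : ℕ)) := by omega
        simp [h, h']
  rw [hcomp]
  have hbf := (Pi.basisFun ℂ (Fin k)).linearIndependent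
  have hcoe : ⇑(Pi.basisFun ℂ (Fin k)) = fun i => Pi.single i (1 : ℂ) :=
    funext fun i => by simp
  rwa [hcoe] at hbf

lemma modelFam_indep (b : Basis (Fin N) ℂ V) (k d : ℕ)
    (hdk : d ≤ k) (hkN : 2 * k - d ≤ N) :
    LinearIndependent ℂ (modelFam (pad ⇑b) k d) :=
  model_indep_aux b k d Complex.I hdk hkN

lemma finrank_modelSpan (b : Basis (Fin N) ℂ V) (k d : ℕ)
    (hdk : d ≤ k) (hkN : 2 * k - d ≤ N) :
    finrank ℂ (modelSpan (pad ⇑b) k d) = k := by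
  rw [modelSpan, finrank_span_eq_card (modelFam_indep b k d hdk hkN), Fintype.card_fin]

lemma tau_pad (hτ : IsRealStructure τ) (b : Basis (Fin N) ℂ V)
    (hb : ∀ i, τ (b i) = b i) (j : ℕ) : τ (pad (⇑b) j) = pad (⇑b) j := by
  unfold pad
  split
  · exact hb _
  · exact map_zero τ

lemma tau_modelFam (hτ : IsRealStructure τ) (b : Basis (Fin N) ℂ V)
    (hb : ∀ i, τ (b i) = b i) (k d : ℕ) :
    (fun i => τ (modelFam (pad ⇑b) k d i)) = fun i : Fin k =>
      if (i : ℕ) < d then pad (⇑b) (i : ℕ)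
      else pad (⇑b) (i : ℕ) + (-Complex.I) • pad (⇑b) ((i : ℕ) + (k - d)) := by
  funext i
  unfold modelFam
  by_cases h : (i : ℕ) < d
  · simp [h, tau_pad hτ b hb]
  · simp only [h, if_false, map_add, tau_smul, Complex.conj_I, tau_pad hτ b hb]

lemma map_tau_modelSpan (hτ : IsRealStructure τ) (b : Basis (Fin N) ℂ V)
    (hb : ∀ i, τ (b i) = b i) (k d : ℕ) :
    Submodule.map τ (modelSpan (pad ⇑b) k d) = span ℂ (Set.range fun i : Fin k =>
      if (i : ℕ) < d then pad (⇑b) (i : ℕ)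
      else pad (⇑b) (i : ℕ) + (-Complex.I) • pad (⇑b) ((i : ℕ) + (k - d))) := by
  rw [modelSpan, Submodule.map_span, ← Set.range_comp]
  congr 1
  exact congrArg Set.range (tau_modelFam hτ b hb k d)

lemma modelSpan_sup (hτ : IsRealStructure τ) (b : Basis (Fin N) ℂ V)
    (hb : ∀ i, τ (b i) = b i) (k d : ℕ) (hdk : d ≤ k) (hkN : 2 * k - d ≤ N) :
    modelSpan (pad ⇑b) k d ⊔ Submodule.map τ (modelSpan (pad ⇑b) k d)
      = span ℂ (Set.range fun j : Fin (2 * k - d) => pad ⇑b (j : ℕ)) := by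
  rw [map_tau_modelSpan hτ b hb k d, modelSpan, ← Submodule.span_union]
  apply le_antisymm
  · rw [span_le]
    rintro x (⟨i, rfl⟩ | ⟨i, rfl⟩) <;>
    · have hik : (i : ℕ) < k := i.isLt
      by_cases h : (i : ℕ) < d
      · simp only [modelFam, h, if_true]
        exact subset_span ⟨⟨(i : ℕ), by omega⟩, rfl⟩
      · simp only [modelFam, h, if_false]
        exact Submodule.add_mem _ (subset_span ⟨⟨(i : ℕ), by omega⟩, rfl⟩)
          (Submodule.smul_mem _ _ (subset_span ⟨⟨(i : ℕ) + (k - d), by omega⟩, rfl⟩))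
  · rw [span_le]
    rintro x ⟨j, rfl⟩
    have hj2kd : (j : ℕ) < 2 * k - d := j.isLt
    by_cases hj1 : (j : ℕ) < d
    · apply subset_span
      left
      refine ⟨⟨(j : ℕ), by omega⟩, ?_⟩
      simp [modelFam, hj1]
    · by_cases hj2 : (j : ℕ) < k
      · have hgen1 : modelFam (pad ⇑b) k d ⟨(j : ℕ), hj2⟩
            = pad ⇑b (j : ℕ) + Complex.I • pad ⇑b ((j : ℕ) + (k - d)) := if_neg hj1
        have hgen2 : (fun i : Fin k =>
            if (i : ℕ) < d then pad (⇑b) (i : ℕ)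
            else pad (⇑b) (i : ℕ) + (-Complex.I) • pad (⇑b) ((i : ℕ) + (k - d)))
              ⟨(j : ℕ), hj2⟩
            = pad ⇑b (j : ℕ) + (-Complex.I) • pad ⇑b ((j : ℕ) + (k - d)) := if_neg hj1
        have hdec : pad ⇑b (j : ℕ) = (2 : ℂ)⁻¹ •
            ((pad ⇑b (j : ℕ) + Complex.I • pad ⇑b ((j : ℕ) + (k - d)))
              + (pad ⇑b (j : ℕ) + (-Complex.I) • pad ⇑b ((j : ℕ) + (k - d)))) := by
          module
        change pad ⇑b (j : ℕ) ∈ _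
        rw [hdec]
        refine Submodule.smul_mem _ _ (Submodule.add_mem _ ?_ ?_)
        · exact subset_span (Or.inl ⟨⟨(j : ℕ), hj2⟩, hgen1⟩)
        · exact subset_span (Or.inr ⟨⟨(j : ℕ), hj2⟩, hgen2⟩)
      · have hik : d ≤ (j : ℕ) - (k - d) ∧ (j : ℕ) - (k - d) < k := by omega
        set i : ℕ := (j : ℕ) - (k - d) with hi
        have hidx : i + (k - d) = (j : ℕ) := by omega
        have hnid : ¬ (i < d) := by omega
        have hgen1 : modelFam (pad ⇑b) k d ⟨i, hik.2⟩
            = pad ⇑b i + Complex.I • pad ⇑b (j : ℕ) := by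
          rw [show modelFam (pad ⇑b) k d ⟨i, hik.2⟩
            = pad ⇑b i + Complex.I • pad ⇑b (i + (k - d)) from if_neg hnid, hidx]
        have hgen2 : (fun i' : Fin k =>
            if (i' : ℕ) < d then pad (⇑b) (i' : ℕ)
            else pad (⇑b) (i' : ℕ) + (-Complex.I) • pad (⇑b) ((i' : ℕ) + (k - d))) ⟨i, hik.2⟩
            = pad ⇑b i + (-Complex.I) • pad ⇑b (j : ℕ) := by
          have h0 : (fun i' : Fin k =>
              if (i' : ℕ) < d then pad (⇑b) (i' : ℕ)
              else pad (⇑b) (i' : ℕ) + (-Complex.I) • pad (⇑b) ((i' : ℕ) + (k - d))) ⟨i, hik.2⟩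
              = if i < d then pad (⇑b) i
                else pad (⇑b) i + (-Complex.I) • pad (⇑b) (i + (k - d)) := rfl
          rw [h0, if_neg hnid, hidx]
        have hstep : (pad ⇑b i + Complex.I • pad ⇑b (j : ℕ))
            - (pad ⇑b i + (-Complex.I) • pad ⇑b (j : ℕ))
            = (2 * Complex.I) • pad ⇑b (j : ℕ) := by
          module
        have hdec : pad ⇑b (j : ℕ) = (-(Complex.I) / 2) •
            ((pad ⇑b i + Complex.I • pad ⇑b (j : ℕ))
              - (pad ⇑b i + (-Complex.I) • pad ⇑b (j : ℕ))) := by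
          rw [hstep, smul_smul,
            show (-(Complex.I) / 2) * (2 * Complex.I) = 1 from by
              linear_combination (-(1 : ℂ)) * Complex.I_mul_I,
            one_smul]
        change pad ⇑b (j : ℕ) ∈ _
        rw [hdec]
        refine Submodule.smul_mem _ _ (Submodule.sub_mem _ ?_ ?_)
        · exact subset_span (Or.inl ⟨⟨i, hik.2⟩, hgen1⟩)
        · exact subset_span (Or.inr ⟨⟨i, hik.2⟩, hgen2⟩)

lemma finrank_span_initial (b : Basis (Fin N) ℂ V) (m : ℕ) (hmN : m ≤ N) :
    finrank ℂ (span ℂ (Set.range fun j : Fin m => pad ⇑b (j : ℕ))) = m := by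
  have hind : LinearIndependent ℂ (fun j : Fin m => pad ⇑b (j : ℕ)) := by
    have heq : (fun j : Fin m => pad ⇑b (j : ℕ))
        = ⇑b ∘ (fun j : Fin m => (⟨(j : ℕ), by omega⟩ : Fin N)) := by
      funext j
      exact pad_lt _ _
    rw [heq]
    exact b.linearIndependent.comp _
      (fun j1 j2 h => Fin.ext (by simpa [Fin.ext_iff] using h))
  rw [finrank_span_eq_card hind, Fintype.card_fin]

lemma finrank_inf_model [FiniteDimensional ℂ V] (hτ : IsRealStructure τ)
    (b : Basis (Fin N) ℂ V) (hb : ∀ i, τ (b i) = b i) (k d : ℕ)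
    (hdk : d ≤ k) (hkN : 2 * k - d ≤ N) :
    finrank ℂ ((modelSpan (pad ⇑b) k d ⊓ Submodule.map τ (modelSpan (pad ⇑b) k d) :
      Submodule ℂ V)) = d := by
  have hsum := Submodule.finrank_sup_add_finrank_inf_eq
    (modelSpan (pad ⇑b) k d) (Submodule.map τ (modelSpan (pad ⇑b) k d))
  rw [modelSpan_sup hτ b hb k d hdk hkN, finrank_span_initial b _ hkN,
    finrank_modelSpan b k d hdk hkN, finrank_map_tau hτ,
    finrank_modelSpan b k d hdk hkN] at hsum
  omega

end Model

section Decomp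

lemma real_avg (hτ : IsRealStructure τ) (x : V) :
    τ ((2 : ℂ)⁻¹ • (x + τ x)) = (2 : ℂ)⁻¹ • (x + τ x) := by
  have hconj2 : (starRingEnd ℂ) ((2 : ℂ)⁻¹) = (2 : ℂ)⁻¹ := by
    rw [map_inv₀]
    simp [Complex.ext_iff]
  rw [tau_smul, map_add, hτ x, hconj2]
  module

lemma real_diff (hτ : IsRealStructure τ) (x : V) :
    τ ((-(Complex.I) / 2) • (x - τ x)) = (-(Complex.I) / 2) • (x - τ x) := by
  have hconjI : (starRingEnd ℂ) (-(Complex.I) / 2) = Complex.I / 2 := by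
    have h2 : (starRingEnd ℂ) (2 : ℂ) = 2 := by simp [Complex.ext_iff]
    rw [map_div₀, map_neg, Complex.conj_I, neg_neg, h2]
  rw [tau_smul, map_sub, hτ x, hconjI]
  module

lemma real_dec (hτ : IsRealStructure τ) (x : V) :
    x = (2 : ℂ)⁻¹ • (x + τ x) + Complex.I • ((-(Complex.I) / 2) • (x - τ x)) := by
  rw [smul_smul, show Complex.I * (-(Complex.I) / 2) = (2 : ℂ)⁻¹ from by
    linear_combination (-(1 : ℂ) / 2) * Complex.I_mul_I]
  module

lemma real_dec_tau (hτ : IsRealStructure τ) (x : V) :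
    τ x = (2 : ℂ)⁻¹ • (x + τ x) - Complex.I • ((-(Complex.I) / 2) • (x - τ x)) := by
  rw [smul_smul, show Complex.I * (-(Complex.I) / 2) = (2 : ℂ)⁻¹ from by
    linear_combination (-(1 : ℂ) / 2) * Complex.I_mul_I]
  module

lemma tau_pad' {M : ℕ} {fam : Fin M → V} (hfam : ∀ i, τ (fam i) = fam i) (j : ℕ) :
    τ (pad fam j) = pad fam j := by
  unfold pad
  split
  · exact hfam _
  · exact map_zero τ

lemma map_tau_top (hτ : IsRealStructure τ) : Submodule.map τ (⊤ : Submodule ℂ V) = ⊤ := by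
  rw [Submodule.map_top, LinearMap.range_eq_top]
  exact fun v => ⟨τ v, hτ v⟩

end Decomp

section Main

/-- Every `k`-dimensional subspace is a model span with respect to some real basis. -/
lemma exists_adapted_basis [FiniteDimensional ℂ V] (hτ : IsRealStructure τ)
    {N k : ℕ} (hN : finrank ℂ V = N) (hN0 : 0 < N) (A : Submodule ℂ V)
    (hA : finrank ℂ A = k) (hkN : 2 * k ≤ N) :
    ∃ c : Basis (Fin N) ℂ V, (∀ i, τ (c i) = c i) ∧
      modelSpan (pad ⇑c) k
        (finrank ℂ ((A ⊓ Submodule.map τ A : Submodule ℂ V))) = A := by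
  classical
  set d := finrank ℂ ((A ⊓ Submodule.map τ A : Submodule ℂ V)) with hd
  set W : Submodule ℂ V := A ⊓ Submodule.map τ A with hWdef
  have hWst : Submodule.map τ W = W := inf_tau_stable hτ A
  have hdk : d ≤ k := by
    rw [hd, ← hA]
    exact Submodule.finrank_mono inf_le_left
  have h2kdN : 2 * k - d ≤ N := by omega
  -- a real basis of W
  obtain ⟨e, he_ind, he_span, -, he_S⟩ := gext W {v : V | v ∈ W ∧ τ v = v}
    (span_reals hτ W hWst) (Nat.zero_le d) hd.symm Fin.elim0
    linearIndependent_empty_type (fun i => i.elim0)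
  have he_real : ∀ i, τ (e i) = e i := fun i => (he_S i (Nat.zero_le _)).2
  have he_W : ∀ i, e i ∈ W := fun i => (he_S i (Nat.zero_le _)).1
  -- extend to a basis of A
  have hWA : W ≤ A := inf_le_left
  obtain ⟨a, ha_ind, ha_span, ha_e, -⟩ := gext A (A : Set V) (Submodule.span_eq A)
    hdk hA e he_ind (fun i => hWA (he_W i))
  -- the complementary vectors and their real/imaginary parts
  set f : Fin (k - d) → V := fun j =>
    a ⟨d + (j : ℕ), by have := j.isLt; omega⟩ with hfdef
  set uu : Fin (k - d) → V := fun j => (2 : ℂ)⁻¹ • (f j + τ (f j)) with huudef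
  set ww : Fin (k - d) → V := fun j => (-(Complex.I) / 2) • (f j - τ (f j)) with hwwdef
  have huu_real : ∀ j, τ (uu j) = uu j := fun j => real_avg hτ (f j)
  have hww_real : ∀ j, τ (ww j) = ww j := fun j => real_diff hτ (f j)
  have hf_dec : ∀ j, f j = uu j + Complex.I • ww j := fun j => real_dec hτ (f j)
  have hf_dec_tau : ∀ j, τ (f j) = uu j - Complex.I • ww j := fun j => real_dec_tau hτ (f j)
  have hmem_a : ∀ i : Fin k, a i ∈ A := by
    intro i
    have h : a i ∈ span ℂ (Set.range a) := subset_span ⟨i, rfl⟩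
    rwa [ha_span] at h
  have hfA : ∀ j, f j ∈ A := fun j => hmem_a _
  -- the combined real family
  set g : Fin (2 * k - d) → V := fun j =>
    if (j : ℕ) < d then pad e (j : ℕ)
    else if (j : ℕ) < k then pad uu ((j : ℕ) - d)
    else pad ww ((j : ℕ) - k) with hgdef
  -- value computations
  have hg_e : ∀ (j : ℕ) (h : j < d), g ⟨j, by omega⟩ = e ⟨j, h⟩ := by
    intro j h
    rw [hgdef]
    simp only
    rw [if_pos (show ((⟨j, by omega⟩ : Fin (2 * k - d)) : ℕ) < d from h)]
    exact pad_lt _ _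
  have hg_u : ∀ (j : ℕ) (h1 : d ≤ j) (h2 : j < k), g ⟨j, by omega⟩ = uu ⟨j - d, by omega⟩ := by
    intro j h1 h2
    rw [hgdef]
    simp only
    rw [if_neg (show ¬ ((⟨j, by omega⟩ : Fin (2 * k - d)) : ℕ) < d by
        show ¬ (j < d); omega),
      if_pos (show ((⟨j, by omega⟩ : Fin (2 * k - d)) : ℕ) < k from h2)]
    exact pad_lt _ _
  have hg_w : ∀ (j : ℕ) (h1 : d ≤ j) (h2 : j < k),
      g ⟨j + (k - d), by omega⟩ = ww ⟨j - d, by omega⟩ := by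
    intro j h1 h2
    rw [hgdef]
    simp only
    rw [if_neg (show ¬ ((⟨j + (k - d), by omega⟩ : Fin (2 * k - d)) : ℕ) < d by
        show ¬ (j + (k - d) < d); omega),
      if_neg (show ¬ ((⟨j + (k - d), by omega⟩ : Fin (2 * k - d)) : ℕ) < k by
        show ¬ (j + (k - d) < k); omega)]
    rw [show ((⟨j + (k - d), by omega⟩ : Fin (2 * k - d)) : ℕ) - k = j - d from by
      show j + (k - d) - k = j - d; omega]
    exact pad_lt _ _
  have hg_real : ∀ j, τ (g j) = g j := by
    intro j
    rw [hgdef]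
    simp only
    split_ifs with h1 h2
    · exact tau_pad' he_real _
    · exact tau_pad' huu_real _
    · exact tau_pad' hww_real _
  have ha_low : ∀ (i : Fin k) (h : (i : ℕ) < d), a i = e ⟨(i : ℕ), h⟩ := by
    intro i h
    exact ha_e ⟨(i : ℕ), h⟩
  have ha_high : ∀ (i : Fin k) (h : ¬ (i : ℕ) < d),
      a i = f ⟨(i : ℕ) - d, by have := i.isLt; omega⟩ := by
    intro i h
    rw [hfdef]
    simp only
    congr 1
    exact Fin.ext (show (i : ℕ) = d + ((i : ℕ) - d) from by omega)
  -- span of the combined family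
  have hg_span : span ℂ (Set.range g) = A ⊔ Submodule.map τ A := by
    apply le_antisymm
    · rw [span_le]
      rintro x ⟨j, rfl⟩
      have hj := j.isLt
      rw [hgdef]
      simp only
      split_ifs with h1 h2
      · rw [pad_lt _ (show (j : ℕ) < d from h1)]
        exact Submodule.mem_sup_left (hWA (he_W _))
      · rw [pad_lt _ (show (j : ℕ) - d < k - d by omega), huudef]
        simp only
        refine Submodule.smul_mem _ _ (Submodule.add_mem _ ?_ ?_)
        · exact Submodule.mem_sup_left (hfA _)
        · exact Submodule.mem_sup_right (Submodule.mem_map_of_mem (hfA _))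
      · rw [pad_lt _ (show (j : ℕ) - k < k - d by omega), hwwdef]
        simp only
        refine Submodule.smul_mem _ _ (Submodule.sub_mem _ ?_ ?_)
        · exact Submodule.mem_sup_left (hfA _)
        · exact Submodule.mem_sup_right (Submodule.mem_map_of_mem (hfA _))
    · have hmemg : ∀ (i : Fin k), a i ∈ span ℂ (Set.range g) := by
        intro i
        have hik := i.isLt
        by_cases h : (i : ℕ) < d
        · rw [ha_low i h, ← hg_e (i : ℕ) h]
          exact subset_span ⟨_, rfl⟩
        · rw [ha_high i h, hf_dec, ← hg_u (i : ℕ) (by omega) hik,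
            ← hg_w (i : ℕ) (by omega) hik]
          exact Submodule.add_mem _ (subset_span ⟨_, rfl⟩)
            (Submodule.smul_mem _ _ (subset_span ⟨_, rfl⟩))
      have hmemg' : ∀ (i : Fin k), τ (a i) ∈ span ℂ (Set.range g) := by
        intro i
        have hik := i.isLt
        by_cases h : (i : ℕ) < d
        · rw [ha_low i h, he_real, ← hg_e (i : ℕ) h]
          exact subset_span ⟨_, rfl⟩
        · rw [ha_high i h, hf_dec_tau, ← hg_u (i : ℕ) (by omega) hik,
            ← hg_w (i : ℕ) (by omega) hik]
          exact Submodule.sub_mem _ (subset_span ⟨_, rfl⟩)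
            (Submodule.smul_mem _ _ (subset_span ⟨_, rfl⟩))
      apply sup_le
      · have h : span ℂ (Set.range a) ≤ span ℂ (Set.range g) := by
          rw [span_le]
          rintro x ⟨i, rfl⟩
          exact hmemg i
        rwa [ha_span] at h
      · have hmapeq : Submodule.map τ A = span ℂ (Set.range fun i => τ (a i)) := by
          conv_lhs => rw [← ha_span]
          rw [Submodule.map_span, ← Set.range_comp]
          rfl
        rw [hmapeq, span_le]
        rintro x ⟨i, rfl⟩
        exact hmemg' i
  -- dimension of the sup, hence independence of g
  have hsup_rank : finrank ℂ ((A ⊔ Submodule.map τ A : Submodule ℂ V)) = 2 * k - d := by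
    have hsum := Submodule.finrank_sup_add_finrank_inf_eq A (Submodule.map τ A)
    rw [hA, finrank_map_tau hτ] at hsum
    have hd2 : finrank ℂ ((A ⊓ Submodule.map τ A : Submodule ℂ V)) = d := rfl
    omega
  have hg_ind : LinearIndependent ℂ g := by
    rw [linearIndependent_iff_card_eq_finrank_span, Set.finrank, hg_span, hsup_rank,
      Fintype.card_fin]
  -- extend to a real basis of V
  obtain ⟨c, hc_ind, hc_span, hc_g, hc_S⟩ := gext (⊤ : Submodule ℂ V)
    {v : V | v ∈ (⊤ : Submodule ℂ V) ∧ τ v = v}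
    (span_reals hτ ⊤ (map_tau_top hτ)) (show 2 * k - d ≤ N by omega)
    (by rw [finrank_top, hN]) g hg_ind (fun i => trivial)
  have hc_real : ∀ i, τ (c i) = c i := by
    intro i
    rcases Nat.lt_or_ge (i : ℕ) (2 * k - d) with h | h
    · have hci : c i = g ⟨(i : ℕ), h⟩ := hc_g ⟨(i : ℕ), h⟩
      rw [hci]
      exact hg_real _
    · exact (hc_S i h).2
  have hcb : Fintype.card (Fin N) = finrank ℂ V := by rw [Fintype.card_fin, hN]
  have hNE : Nonempty (Fin N) := ⟨⟨0, hN0⟩⟩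
  set cb : Basis (Fin N) ℂ V := basisOfLinearIndependentOfCardEqFinrank hc_ind hcb with hcbdef
  have hcb_coe : ⇑cb = c := coe_basisOfLinearIndependentOfCardEqFinrank hc_ind hcb
  refine ⟨cb, ?_, ?_⟩
  · intro i
    rw [hcb_coe]
    exact hc_real i
  · rw [hcb_coe]
    have hpadc : ∀ (j : ℕ) (hj : j < 2 * k - d), pad c j = g ⟨j, hj⟩ := by
      intro j hj
      rw [pad_lt _ (show j < N by omega)]
      exact hc_g ⟨j, hj⟩
    have hfam : modelFam (pad c) k d = a := by
      funext i
      have hik := i.isLt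
      show (if (i : ℕ) < d then pad c (i : ℕ)
        else pad c (i : ℕ) + Complex.I • pad c ((i : ℕ) + (k - d))) = a i
      by_cases h : (i : ℕ) < d
      · rw [if_pos h, hpadc (i : ℕ) (by omega), hg_e (i : ℕ) h, ha_low i h]
      · rw [if_neg h, hpadc (i : ℕ) (by omega), hpadc ((i : ℕ) + (k - d)) (by omega),
          hg_u (i : ℕ) (by omega) hik, hg_w (i : ℕ) (by omega) hik,
          ← hf_dec ⟨(i : ℕ) - d, by omega⟩, ha_high i h]
    rw [modelSpan, hfam, ha_span]

end Main

section Bridge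

lemma det_real {N : ℕ} (b c : Basis (Fin N) ℂ V) (hb : ∀ i, τ (b i) = b i)
    (hc : ∀ i, τ (c i) = c i) :
    (starRingEnd ℂ) (LinearMap.det ((b.equiv c (Equiv.refl _)) : V →ₗ[ℂ] V))
      = LinearMap.det ((b.equiv c (Equiv.refl _)) : V →ₗ[ℂ] V) := by
  classical
  have hM : (LinearMap.toMatrix b b ((b.equiv c (Equiv.refl _)) : V →ₗ[ℂ] V)).map
      (starRingEnd ℂ) = LinearMap.toMatrix b b ((b.equiv c (Equiv.refl _)) : V →ₗ[ℂ] V) := by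
    ext i j
    rw [Matrix.map_apply, LinearMap.toMatrix_apply]
    have hφ : ((b.equiv c (Equiv.refl _)) : V →ₗ[ℂ] V) (b j) = c j := by
      simp [Basis.equiv_apply]
    rw [hφ]
    exact repr_real b hb (hc j) i
  rw [← LinearMap.det_toMatrix b, RingHom.map_det, RingHom.mapMatrix_apply, hM]

lemma det_equiv_unitsSMul {N : ℕ} (c : Basis (Fin N) ℂ V) (s : Fin N → ℂˣ) :
    LinearMap.det ((c.equiv (c.unitsSMul s) (Equiv.refl _)) : V →ₗ[ℂ] V)
      = ∏ i, (s i : ℂ) := by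
  classical
  rw [← LinearMap.det_toMatrix c]
  have hM : LinearMap.toMatrix c c ((c.equiv (c.unitsSMul s) (Equiv.refl _)) : V →ₗ[ℂ] V)
      = Matrix.diagonal (fun i => (s i : ℂ)) := by
    ext i j
    rw [LinearMap.toMatrix_apply]
    have hφ : ((c.equiv (c.unitsSMul s) (Equiv.refl _)) : V →ₗ[ℂ] V) (c j)
        = (s j : ℂ) • c j := by
      simp [Basis.equiv_apply, Basis.unitsSMul_apply, Units.smul_def]
    rw [hφ, map_smul, Finsupp.smul_apply, c.repr_self, Finsupp.single_apply,
      Matrix.diagonal_apply]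
    by_cases h : i = j
    · subst h
      simp
    · have h' : ¬ j = i := fun hh => h hh.symm
      simp [h, h']
  rw [hM, Matrix.det_diagonal]

lemma bridge [FiniteDimensional ℂ V] (hτ : IsRealStructure τ) {N k d : ℕ}
    (hNV : finrank ℂ V = N) (hdk : d ≤ k) (h2k : 2 * k + 1 ≤ N)
    (b c : Basis (Fin N) ℂ V) (hb : ∀ i, τ (b i) = b i) (hc : ∀ i, τ (c i) = c i) :
    ∃ φ : V ≃ₗ[ℂ] V, (∀ v, φ (τ v) = τ (φ v)) ∧
      LinearMap.det (φ : V →ₗ[ℂ] V) = 1 ∧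
      Submodule.map (φ : V →ₗ[ℂ] V) (modelSpan (pad ⇑b) k d) = modelSpan (pad ⇑c) k d := by
  classical
  set r : ℂ := LinearMap.det ((b.equiv c (Equiv.refl _)) : V →ₗ[ℂ] V) with hr
  have hr0 : r ≠ 0 := (LinearEquiv.isUnit_det' (b.equiv c (Equiv.refl _))).ne_zero
  have hrreal : (starRingEnd ℂ) r = r := det_real b c hb hc
  set rinv : ℂˣ := (Units.mk0 r hr0)⁻¹ with hrinv
  have hrinv_coe : ((rinv : ℂˣ) : ℂ) = r⁻¹ := by
    rw [hrinv]
    simp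
  set s : Fin N → ℂˣ := fun j => if (j : ℕ) = N - 1 then rinv else 1 with hs
  set c' : Basis (Fin N) ℂ V := c.unitsSMul s with hc'def
  have hsreal : ∀ j, (starRingEnd ℂ) ((s j : ℂ)) = (s j : ℂ) := by
    intro j
    rw [hs]
    by_cases h : (j : ℕ) = N - 1
    · simp only [h, if_true, if_pos]
      rw [hrinv_coe, map_inv₀, hrreal]
    · simp [h]
  have hc'_real : ∀ i, τ (c' i) = c' i := by
    intro i
    rw [hc'def, Basis.unitsSMul_apply, Units.smul_def, tau_smul, hc i, hsreal i]
  set φ : V ≃ₗ[ℂ] V := b.equiv c' (Equiv.refl _) with hφdef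
  have hφb : ∀ i, φ (b i) = c' i := by
    intro i
    rw [hφdef]
    simp [Basis.equiv_apply]
  have hcomm : ∀ v, φ (τ v) = τ (φ v) := by
    refine comm_of_real_basis hτ b hb (φ : V →ₗ[ℂ] V) ?_
    intro i
    show τ (φ (b i)) = φ (b i)
    rw [hφb i]
    exact hc'_real i
  have hdet : LinearMap.det (φ : V →ₗ[ℂ] V) = 1 := by
    have hcomp : (φ : V →ₗ[ℂ] V)
        = ((c.equiv c' (Equiv.refl _)) : V →ₗ[ℂ] V).comp
          ((b.equiv c (Equiv.refl _)) : V →ₗ[ℂ] V) := by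
      apply b.ext
      intro i
      simp [hφdef, Basis.equiv_apply]
    have hprod : (∏ i, (s i : ℂ)) = r⁻¹ := by
      rw [hs]
      rw [Finset.prod_eq_single (⟨N - 1, by omega⟩ : Fin N)]
      · show ((if (N - 1 : ℕ) = N - 1 then rinv else 1 : ℂˣ) : ℂ) = r⁻¹
        rw [if_pos rfl, hrinv_coe]
      · intro j _ hj
        have hne : ¬ ((j : ℕ) = N - 1) := by
          intro hh
          exact hj (Fin.ext (by simpa using hh))
        simp [hne]
      · intro h
        exact absurd (Finset.mem_univ _) h
    rw [hcomp, LinearMap.det_comp]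
    rw [hc'def, det_equiv_unitsSMul c s, hprod, ← hr, inv_mul_cancel₀ hr0]
  have hpadc' : ∀ j : ℕ, j < 2 * k - d → pad ⇑c' j = pad ⇑c j := by
    intro j hj
    have hjN : j < N := by omega
    rw [pad_lt _ hjN, pad_lt _ hjN, hc'def, Basis.unitsSMul_apply]
    have hsj : s ⟨j, hjN⟩ = 1 := by
      rw [hs]
      show (if j = N - 1 then rinv else 1) = 1
      exact if_neg (by omega)
    rw [hsj, one_smul]
  have hmodel_eq : modelSpan (pad ⇑c') k d = modelSpan (pad ⇑c) k d := by
    unfold modelSpan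
    congr 1
    apply congrArg
    funext i
    have hik := i.isLt
    show (if (i : ℕ) < d then pad ⇑c' (i : ℕ)
        else pad ⇑c' (i : ℕ) + Complex.I • pad ⇑c' ((i : ℕ) + (k - d)))
      = (if (i : ℕ) < d then pad ⇑c (i : ℕ)
        else pad ⇑c (i : ℕ) + Complex.I • pad ⇑c ((i : ℕ) + (k - d)))
    by_cases h : (i : ℕ) < d
    · rw [if_pos h, if_pos h, hpadc' _ (by omega)]
    · rw [if_neg h, if_neg h, hpadc' _ (by omega), hpadc' _ (by omega)]
  have hφpad : ∀ j : ℕ, j < 2 * k - d → φ (pad ⇑b j) = pad ⇑c' j := by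
    intro j hj
    have hjN : j < N := by omega
    rw [pad_lt _ hjN, pad_lt _ hjN]
    exact hφb _
  have hmap : Submodule.map (φ : V →ₗ[ℂ] V) (modelSpan (pad ⇑b) k d)
      = modelSpan (pad ⇑c') k d := by
    unfold modelSpan
    rw [Submodule.map_span, ← Set.range_comp]
    congr 1
    apply congrArg
    funext i
    have hik := i.isLt
    show φ (if (i : ℕ) < d then pad ⇑b (i : ℕ)
        else pad ⇑b (i : ℕ) + Complex.I • pad ⇑b ((i : ℕ) + (k - d)))
      = (if (i : ℕ) < d then pad ⇑c' (i : ℕ)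
        else pad ⇑c' (i : ℕ) + Complex.I • pad ⇑c' ((i : ℕ) + (k - d)))
    by_cases h : (i : ℕ) < d
    · rw [if_pos h, if_pos h, hφpad _ (by omega)]
    · rw [if_neg h, if_neg h, map_add, map_smul, hφpad _ (by omega), hφpad _ (by omega)]
  exact ⟨φ, hcomm, hdet, by rw [hmap, hmodel_eq]⟩

lemma invariant_of_orbit [FiniteDimensional ℂ V] (hτ : IsRealStructure τ) {k : ℕ}
    (A B : {U : Submodule ℂ V // finrank ℂ U = k}) (h : SameSLROrbit τ k A B) :
    finrank ℂ ((A.1 ⊓ Submodule.map τ A.1 : Submodule ℂ V))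
      = finrank ℂ ((B.1 ⊓ Submodule.map τ B.1 : Submodule ℂ V)) := by
  obtain ⟨φ, hcomm, -, hmap⟩ := h
  have hτφ : Submodule.map τ (Submodule.map (φ : V →ₗ[ℂ] V) A.1)
      = Submodule.map (φ : V →ₗ[ℂ] V) (Submodule.map τ A.1) := by
    ext x
    simp only [Submodule.mem_map]
    constructor
    · rintro ⟨y, ⟨a, ha, rfl⟩, rfl⟩
      refine ⟨τ a, ⟨a, ha, rfl⟩, ?_⟩
      exact hcomm a
    · rintro ⟨y, ⟨a, ha, rfl⟩, rfl⟩
      refine ⟨φ a, ⟨a, ha, rfl⟩, ?_⟩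
      exact (hcomm a).symm
  have hinj : Function.Injective (φ : V →ₗ[ℂ] V) := φ.injective
  have hBinf : (B.1 ⊓ Submodule.map τ B.1 : Submodule ℂ V)
      = Submodule.map (φ : V →ₗ[ℂ] V) (A.1 ⊓ Submodule.map τ A.1) := by
    rw [← hmap, hτφ, Submodule.map_inf _ hinj]
  rw [hBinf, LinearEquiv.finrank_map_eq φ]

end Bridge


end SLRAux

theorem card_SLR_orbits_grassmannian
    [FiniteDimensional ℂ V] (n k : ℕ) (hn : finrank ℂ V = 2 * n - 1) (hn1 : 1 ≤ n)
    (τ : V →ₗ⋆[ℂ] V) (hτ : IsRealStructure τ) (hk : k ≤ n - 1) :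
    Nat.card (Quot (SameSLROrbit τ k (V := V))) = k + 1 := by
  classical
  set N := 2 * n - 1 with hNdef
  have hNV : finrank ℂ V = N := hn
  have hN0 : 0 < N := by omega
  have h2k : 2 * k + 1 ≤ N := by omega
  -- a base real basis of V
  obtain ⟨c0f, hc0_ind, hc0_span, -, hc0_S⟩ := SLRAux.gext (⊤ : Submodule ℂ V)
    {v : V | v ∈ (⊤ : Submodule ℂ V) ∧ τ v = v}
    (SLRAux.span_reals hτ ⊤ (SLRAux.map_tau_top hτ))
    (Nat.zero_le N) (by rw [finrank_top, hNV]) Fin.elim0 linearIndependent_empty_type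
    (fun i => i.elim0)
  have hc0_real : ∀ i, τ (c0f i) = c0f i := fun i => (hc0_S i (Nat.zero_le _)).2
  have hcard : Fintype.card (Fin N) = finrank ℂ V := by rw [Fintype.card_fin, hNV]
  have hNE : Nonempty (Fin N) := ⟨⟨0, hN0⟩⟩
  set c0 : Basis (Fin N) ℂ V := basisOfLinearIndependentOfCardEqFinrank hc0_ind hcard
    with hc0def
  have hc0_coe : ⇑c0 = c0f := coe_basisOfLinearIndependentOfCardEqFinrank _ _
  have hc0r : ∀ i, τ (c0 i) = c0 i := by
    intro i
    rw [hc0_coe]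
    exact hc0_real i
  -- models
  have hmodel_rank : ∀ d : ℕ, d ≤ k →
      finrank ℂ (SLRAux.modelSpan (SLRAux.pad ⇑c0) k d) = k :=
    fun d hd => SLRAux.finrank_modelSpan c0 k d hd (by omega)
  have hmodel_inv : ∀ d : ℕ, d ≤ k →
      finrank ℂ ((SLRAux.modelSpan (SLRAux.pad ⇑c0) k d
        ⊓ Submodule.map τ (SLRAux.modelSpan (SLRAux.pad ⇑c0) k d) : Submodule ℂ V)) = d :=
    fun d hd => SLRAux.finrank_inf_model hτ c0 hc0r k d hd (by omega)
  -- invariant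
  have hinv_resp : ∀ A B, SameSLROrbit τ k A B →
      (fun A : {U : Submodule ℂ V // finrank ℂ U = k} =>
        finrank ℂ ((A.1 ⊓ Submodule.map τ A.1 : Submodule ℂ V))) A
      = (fun A : {U : Submodule ℂ V // finrank ℂ U = k} =>
        finrank ℂ ((A.1 ⊓ Submodule.map τ A.1 : Submodule ℂ V))) B :=
    fun A B h => SLRAux.invariant_of_orbit hτ A B h
  set invQ : Quot (SameSLROrbit τ k (V := V)) → ℕ := Quot.lift _ hinv_resp with hinvQ
  set F : Fin (k + 1) → Quot (SameSLROrbit τ k (V := V)) := fun d =>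
    Quot.mk _ ⟨SLRAux.modelSpan (SLRAux.pad ⇑c0) k (d : ℕ),
      hmodel_rank (d : ℕ) (by have := d.isLt; omega)⟩ with hF
  have hinvF : ∀ d : Fin (k + 1), invQ (F d) = (d : ℕ) := by
    intro d
    show finrank ℂ _ = (d : ℕ)
    exact hmodel_inv (d : ℕ) (by have := d.isLt; omega)
  have hFinj : Function.Injective F := by
    intro d1 d2 h
    have h2 : invQ (F d1) = invQ (F d2) := by rw [h]
    rw [hinvF, hinvF] at h2
    exact Fin.ext h2
  have hFsurj : Function.Surjective F := by
    intro q
    obtain ⟨A, rfl⟩ := q.exists_rep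
    have hdk : finrank ℂ ((A.1 ⊓ Submodule.map τ A.1 : Submodule ℂ V)) ≤ k := by
      calc finrank ℂ ((A.1 ⊓ Submodule.map τ A.1 : Submodule ℂ V))
          ≤ finrank ℂ A.1 := Submodule.finrank_mono inf_le_left
        _ = k := A.2
    refine ⟨⟨finrank ℂ ((A.1 ⊓ Submodule.map τ A.1 : Submodule ℂ V)), by omega⟩, ?_⟩
    apply Quot.sound
    obtain ⟨cA, hcA_real, hcA_model⟩ :=
      SLRAux.exists_adapted_basis hτ hNV hN0 A.1 A.2 (by omega)
    obtain ⟨φ, h1, h2, h3⟩ := SLRAux.bridge hτ hNV hdk h2k c0 cA hc0r hcA_real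
    exact ⟨φ, h1, h2, by rw [h3, hcA_model]⟩
  rw [← Nat.card_eq_of_bijective F ⟨hFinj, hFsurj⟩, Nat.card_eq_fintype_card,
    Fintype.card_fin]
end
end

section
/- Let V be a complex vector space with a real structure τ and let A be a complex subspace of V. If A' is a complex subspace of A with A = A' ⊕ (A ∩ τ(A)), then A' ∩ τ(A') = {0} and A + τ(A) = (A ∩ τ(A)) ⊕ (A' ⊕ τ(A')). -/
open Module Submodule

noncomputable section

variable {V : Type} [AddCommGroup V] [Module ℂ V]

lemma rs_map_map (τ : V →ₗ⋆[ℂ] V) (hτ : IsRealStructure τ) (S : Submodule ℂ V) :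
    Submodule.map τ (Submodule.map τ S) = S := by
  ext x
  constructor
  · rintro ⟨y, ⟨z, hz, rfl⟩, rfl⟩
    rwa [hτ]
  · intro hx
    exact ⟨τ x, ⟨x, hx, rfl⟩, hτ x⟩

lemma rs_map_N_le (τ : V →ₗ⋆[ℂ] V) (hτ : IsRealStructure τ) (A : Submodule ℂ V) :
    Submodule.map τ (A ⊓ Submodule.map τ A) ≤ A ⊓ Submodule.map τ A := by
  rintro x ⟨y, ⟨hyA, hyT⟩, rfl⟩
  obtain ⟨z, hz, hzy⟩ := hyT
  refine ⟨?_, ⟨y, hyA, rfl⟩⟩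
  rw [← hzy, hτ]
  exact hz

lemma rs_map_N (τ : V →ₗ⋆[ℂ] V) (hτ : IsRealStructure τ) (A : Submodule ℂ V) :
    Submodule.map τ (A ⊓ Submodule.map τ A) = A ⊓ Submodule.map τ A := by
  apply le_antisymm (rs_map_N_le τ hτ A)
  conv_lhs => rw [← rs_map_map τ hτ (A ⊓ Submodule.map τ A)]
  exact Submodule.map_mono (rs_map_N_le τ hτ A)

lemma rs_lattice {L : Type*} [Lattice L] (N B C : L) :
    (B ⊔ N) ⊔ (C ⊔ N) = N ⊔ (B ⊔ C) := by
  apply le_antisymm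
  · exact sup_le (sup_le (le_sup_of_le_right le_sup_left) le_sup_left)
      (sup_le (le_sup_of_le_right le_sup_right) le_sup_left)
  · exact sup_le (le_sup_of_le_left le_sup_right)
      (sup_le (le_sup_of_le_left le_sup_left) (le_sup_of_le_right le_sup_left))

set_option maxHeartbeats 1000000 in
theorem real_structure_complement_decomposition
    (τ : V →ₗ⋆[ℂ] V) (hτ : IsRealStructure τ)
    (A A' : Submodule ℂ V) (hA' : A' ≤ A)
    (hsup : A' ⊔ (A ⊓ Submodule.map τ A) = A)
    (hdisj : A' ⊓ (A ⊓ Submodule.map τ A) = ⊥) :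
    A' ⊓ Submodule.map τ A' = ⊥ ∧
    A ⊔ Submodule.map τ A = (A ⊓ Submodule.map τ A) ⊔ (A' ⊔ Submodule.map τ A') ∧
    Disjoint (A ⊓ Submodule.map τ A) (A' ⊔ Submodule.map τ A') ∧
    Disjoint A' (Submodule.map τ A') := by
  have h1 : A' ⊓ Submodule.map τ A' = ⊥ := by
    apply le_antisymm _ bot_le
    intro x ⟨hx1, hx2⟩
    have : x ∈ A' ⊓ (A ⊓ Submodule.map τ A) :=
      ⟨hx1, hA' hx1, Submodule.map_mono hA' hx2⟩
    rwa [hdisj] at this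
  have h3 : Disjoint (A ⊓ Submodule.map τ A) (A' ⊔ Submodule.map τ A') := by
    rw [disjoint_def]
    intro x hxN hxS
    obtain ⟨a, ha, b, hb, rfl⟩ := Submodule.mem_sup.mp hxS
    have hbA : b ∈ A := by
      have : (a + b) - a ∈ A := Submodule.sub_mem A hxN.1 (hA' ha)
      simpa using this
    have hbN : b ∈ A ⊓ Submodule.map τ A := ⟨hbA, Submodule.map_mono hA' hb⟩
    have hτbN : τ b ∈ A ⊓ Submodule.map τ A := by
      rw [← rs_map_N τ hτ A]
      exact ⟨b, hbN, rfl⟩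
    obtain ⟨c, hc, rfl⟩ := hb
    have hc0 : c ∈ A' ⊓ (A ⊓ Submodule.map τ A) := ⟨hc, by rwa [hτ] at hτbN⟩
    rw [hdisj] at hc0
    simp only [Submodule.mem_bot] at hc0
    subst hc0
    simp only [map_zero, add_zero] at hxN ⊢
    have : a ∈ A' ⊓ (A ⊓ Submodule.map τ A) := ⟨ha, hxN⟩
    rwa [hdisj, Submodule.mem_bot] at this
  have h2 : A ⊔ Submodule.map τ A =
      (A ⊓ Submodule.map τ A) ⊔ (A' ⊔ Submodule.map τ A') := by
    conv_lhs => rw [← hsup, Submodule.map_sup, rs_map_N τ hτ A]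
    exact rs_lattice _ _ _
  have h4 : Disjoint A' (Submodule.map τ A') := by
    rw [disjoint_iff]
    exact h1
  exact ⟨h1, h2, h3, h4⟩
end
end

section
/- Let V be a complex vector space of even dimension 2n with a quaternionic structure J. The number of orbits of SL(V, ℍ) (the group of determinant-1 C-linear operators commuting with J) on the Grassmannian Gr(k, V), for k ≤ n, equals ⌊k/2⌋ + 1. -/
open Module Submodule

noncomputable section

variable {V : Type} [AddCommGroup V] [Module ℂ V]

/-- A quaternionic structure on a complex vector space is an antilinear automorphism `J`
with `J² = -id`. -/
def IsQuaternionicStructure (J : V →ₗ⋆[ℂ] V) : Prop :=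
  ∀ v, J (J v) = -v

/-- Two `k`-dimensional subspaces lie in the same orbit of `SL(V, ℍ)`, the group of
determinant-one `ℂ`-linear operators commuting with the quaternionic structure `J`. -/
def SameSLHOrbit (J : V →ₗ⋆[ℂ] V) (k : ℕ)
    (A B : {U : Submodule ℂ V // Module.finrank ℂ U = k}) : Prop :=
  ∃ φ : V ≃ₗ[ℂ] V, (∀ v, φ (J v) = J (φ v)) ∧
    LinearMap.det (φ : V →ₗ[ℂ] V) = 1 ∧
    Submodule.map (φ : V →ₗ[ℂ] V) A.1 = B.1

/-!
`dim (A ∩ J A)` is unchanged by any `ℂ`-linear automorphism commuting with `J`. Conversely,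
completing an `ℍ`-basis `c` of `A ∩ J A` by vectors `d` of `A` and then by `u` to an `ℍ`-basis of
`V` puts `A` into the normal form `ℍ·c ⊕ ℂ·d`, whose shape is determined by `dim A` and
`dim (A ∩ J A) = 2 |c|`. Two such bases differ by an automorphism commuting with `J`; its
determinant is a positive real, so a real rescaling puts it in `SL(V, ℍ)`. Hence the orbits on
`Gr(k, V)` correspond to the even values `2m ≤ k`, all of which occur because `k ≤ n`.
-/

namespace IsQuaternionicStructure

variable {J : V →ₗ⋆[ℂ] V} (hJ : IsQuaternionicStructure J)
include hJ

theorem injective : Function.Injective J := fun x y h => by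
  simpa [hJ x, hJ y] using congrArg J h

theorem map_map_eq (p : Submodule ℂ V) : (p.map J).map J = p := by
  ext x
  simp only [mem_map, exists_exists_and_eq_and]
  refine ⟨fun ⟨y, hy, hxy⟩ => ?_, fun hx => ⟨-x, neg_mem hx, by simp [hJ x]⟩⟩
  rw [← hxy, hJ]
  exact neg_mem hy

theorem finrank_map (p : Submodule ℂ V) : finrank ℂ (p.map J) = finrank ℂ p := by
  let e := equivMapOfInjective J hJ.injective p
  have := rank_eq_of_equiv_equiv (starRingEnd ℂ) e.toAddEquiv.symm
    star_involutive.bijective (fun r m => e.symm.map_smulₛₗ r m)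
  rw [finrank, finrank, this]

theorem mapQ {U : Submodule ℂ V} (hU : U ≤ U.comap J) :
    IsQuaternionicStructure (U.mapQ U J hU) := by
  intro z
  induction z using Submodule.Quotient.induction_on
  simp [hJ _]

/-- For `y = a • x + b • J x` one has `conj a • y - b • J y = (|a|² + |b|²) • x`. -/
theorem eq_zero_of_smul_add_smul_mem {Y : Submodule ℂ V} (hY : Y.map J ≤ Y) {x : V} (hx : x ∉ Y)
    {a b : ℂ} (h : a • x + b • J x ∈ Y) : a = 0 ∧ b = 0 := by
  have hJy : J (a • x + b • J x) ∈ Y := hY (mem_map_of_mem h)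
  have key : starRingEnd ℂ a • (a • x + b • J x) - b • J (a • x + b • J x)
      = ((Complex.normSq a + Complex.normSq b : ℝ) : ℂ) • x := by
    simp only [map_add, map_smulₛₗ, hJ x, Complex.ofReal_add, Complex.normSq_eq_conj_mul_self]
    module
  have hmem := key ▸ Y.sub_mem (Y.smul_mem _ h) (Y.smul_mem b hJy)
  have hzero : Complex.normSq a + Complex.normSq b = 0 := by
    by_contra hne
    exact hx ((Y.smul_mem_iff (Complex.ofReal_ne_zero.2 hne)).1 hmem)
  constructor <;> rw [← Complex.normSq_eq_zero] <;>
    linarith [Complex.normSq_nonneg a, Complex.normSq_nonneg b]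

theorem linearIndependent_pair {x : V} (hx : x ≠ 0) : LinearIndependent ℂ ![x, J x] :=
  LinearIndependent.pair_iff.2 fun _ _ h =>
    hJ.eq_zero_of_smul_add_smul_mem (Y := ⊥) (by simp) (by simpa using hx) (h ▸ zero_mem _)

end IsQuaternionicStructure

def quaternionicSpan (J : V →ₗ⋆[ℂ] V) (s : Set V) : Submodule ℂ V :=
  span ℂ (s ∪ J '' s)

section QuaternionicSpan

variable {J : V →ₗ⋆[ℂ] V}

theorem subset_quaternionicSpan (s : Set V) : s ⊆ quaternionicSpan J s :=
  Set.subset_union_left.trans subset_span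

theorem quaternionicSpan_mono {s t : Set V} (h : s ⊆ t) :
    quaternionicSpan J s ≤ quaternionicSpan J t :=
  span_mono (Set.union_subset_union h (Set.image_mono h))

theorem quaternionicSpan_le {s : Set V} {p : Submodule ℂ V} (hp : p.map J ≤ p) (hs : s ⊆ p) :
    quaternionicSpan J s ≤ p :=
  span_le.2 (Set.union_subset hs (Set.image_subset_iff.2 fun _ hx => hp (mem_map_of_mem (hs hx))))

theorem quaternionicSpan_univ : quaternionicSpan J Set.univ = ⊤ :=
  eq_top_iff.2 fun x _ => subset_quaternionicSpan _ (Set.mem_univ x)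

theorem quaternionicSpan_union (s t : Set V) :
    quaternionicSpan J (s ∪ t) = quaternionicSpan J s ⊔ quaternionicSpan J t := by
  simp only [quaternionicSpan, Set.image_union, span_union]
  exact sup_sup_sup_comm _ _ _ _

theorem quaternionicSpan_coe (p : Submodule ℂ V) :
    quaternionicSpan J p = p ⊔ p.map J := by
  rw [quaternionicSpan, span_union, span_eq, ← map_coe, span_eq]

theorem quaternionicSpan_singleton (x : V) :
    quaternionicSpan J {x} = span ℂ (Set.range ![x, J x]) := by
  simp [quaternionicSpan]

theorem quaternionicSpan_range {ι : Type*} (e : ι → V) :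
    quaternionicSpan J (Set.range e) = span ℂ (Set.range (Sum.elim e (J ∘ e))) := by
  rw [quaternionicSpan, Set.Sum.elim_range, Set.range_comp]

theorem map_quaternionicSpan {φ : V →ₗ[ℂ] V} (hφ : ∀ v, φ (J v) = J (φ v)) (s : Set V) :
    (quaternionicSpan J s).map φ = quaternionicSpan J (φ '' s) := by
  simp only [quaternionicSpan, map_span, Set.image_union, Set.image_image, hφ]

theorem IsQuaternionicStructure.map_quaternionicSpan_le (hJ : IsQuaternionicStructure J)
    (s : Set V) : (quaternionicSpan J s).map J ≤ quaternionicSpan J s := by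
  rw [quaternionicSpan, map_span, span_le]
  rintro _ ⟨y, hy | ⟨x, hx, rfl⟩, rfl⟩
  · exact subset_span (Or.inr ⟨y, hy, rfl⟩)
  · rw [hJ x]
    exact neg_mem (subset_span (Or.inl hx))

theorem IsQuaternionicStructure.finrank_sup_quaternionicSpan_singleton [FiniteDimensional ℂ V]
    (hJ : IsQuaternionicStructure J) {Y : Submodule ℂ V} (hY : Y.map J ≤ Y) {x : V}
    (hx : x ∉ Y) : finrank ℂ ↥(Y ⊔ quaternionicSpan J {x}) = finrank ℂ Y + 2 := by
  have hdisj : Y ⊓ quaternionicSpan J {x} = ⊥ := by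
    rw [eq_bot_iff]
    intro z hz
    obtain ⟨hzY, hz⟩ := mem_inf.1 hz
    rw [quaternionicSpan, Set.image_singleton, Set.singleton_union, mem_span_pair] at hz
    obtain ⟨a, b, rfl⟩ := hz
    obtain ⟨rfl, rfl⟩ := hJ.eq_zero_of_smul_add_smul_mem hY hx hzY
    simp
  have := finrank_sup_add_finrank_inf_eq Y (quaternionicSpan J {x})
  rw [hdisj, finrank_bot, quaternionicSpan_singleton,
    finrank_span_eq_card (hJ.linearIndependent_pair (ne_of_mem_of_not_mem Y.zero_mem hx).symm)]
    at this
  rw [quaternionicSpan_singleton]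
  simpa using this

theorem IsQuaternionicStructure.exists_extension [FiniteDimensional ℂ V]
    (hJ : IsQuaternionicStructure J) (s : Set V) {Y : Submodule ℂ V} (hY : Y.map J ≤ Y) :
    ∃ (r : ℕ) (u : Fin r → V), (∀ i, u i ∈ s) ∧
      Y ⊔ quaternionicSpan J (Set.range u) = Y ⊔ quaternionicSpan J s ∧
      finrank ℂ Y + 2 * r = finrank ℂ ↥(Y ⊔ quaternionicSpan J s) := by
  induction hN : finrank ℂ V - finrank ℂ Y using Nat.strong_induction_on generalizing Y with
  | _ N ih =>
  by_cases hsY : s ⊆ Y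
  · have hY' : Y ⊔ quaternionicSpan J s = Y := sup_eq_left.2 (quaternionicSpan_le hY hsY)
    refine ⟨0, Fin.elim0, fun i => i.elim0, ?_, by rw [hY', mul_zero, add_zero]⟩
    rw [hY']
    simp [quaternionicSpan]
  obtain ⟨x, hxs, hxY⟩ := Set.not_subset.1 hsY
  set Y' := Y ⊔ quaternionicSpan J {x}
  have hY' : Y'.map J ≤ Y' := by
    rw [Submodule.map_sup]
    exact sup_le_sup hY (hJ.map_quaternionicSpan_le _)
  have hdim : finrank ℂ Y' = finrank ℂ Y + 2 := hJ.finrank_sup_quaternionicSpan_singleton hY hxY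
  obtain ⟨r, u, hus, hspan, hfin⟩ := ih _ (by have := Y'.finrank_le; omega) hY' rfl
  have hsup : Y' ⊔ quaternionicSpan J s = Y ⊔ quaternionicSpan J s := by
    rw [sup_assoc, sup_eq_right.2 (quaternionicSpan_mono (Set.singleton_subset_iff.2 hxs))]
  refine ⟨r + 1, Fin.cons x u, Fin.cases hxs hus, ?_, by rw [← hsup]; omega⟩
  rw [Fin.range_cons, Set.insert_eq, quaternionicSpan_union, ← sup_assoc, hspan, hsup]

end QuaternionicSpan

def IsQuaternionicBasis (J : V →ₗ⋆[ℂ] V) {ι : Type*} (e : ι → V) : Prop :=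
  LinearIndependent ℂ (Sum.elim e (J ∘ e)) ∧ quaternionicSpan J (Set.range e) = ⊤

namespace IsQuaternionicBasis

variable {J : V →ₗ⋆[ℂ] V} {ι : Type*} {e : ι → V}

theorem of_quaternionicSpan_eq_top [FiniteDimensional ℂ V] [Fintype ι]
    (h : quaternionicSpan J (Set.range e) = ⊤) (hcard : 2 * Fintype.card ι = finrank ℂ V) :
    IsQuaternionicBasis J e := by
  refine ⟨linearIndependent_of_top_le_span_of_card_eq_finrank ?_ ?_, h⟩
  · rw [← quaternionicSpan_range, h]
  · rw [Fintype.card_sum, ← two_mul, hcard]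

theorem card [Fintype ι] (he : IsQuaternionicBasis J e) :
    2 * Fintype.card ι = finrank ℂ V := by
  have := finrank_span_eq_card he.1
  rw [← quaternionicSpan_range, he.2, finrank_top, Fintype.card_sum] at this
  omega

theorem comp_equiv {κ : Type*} (he : IsQuaternionicBasis J e) (σ : κ ≃ ι) :
    IsQuaternionicBasis J (e ∘ σ) := by
  refine ⟨?_, by rw [Set.range_comp, σ.range_eq_univ, Set.image_univ, he.2]⟩
  have := he.1.comp (Sum.map σ σ) (σ.sumCongr σ).injective
  rwa [Sum.elim_comp_map] at this

theorem finrank_quaternionicSpan_comp {κ : Type*} [Fintype κ] (he : IsQuaternionicBasis J e)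
    {f : κ → ι} (hf : Function.Injective f) :
    finrank ℂ (quaternionicSpan J (Set.range (e ∘ f))) = 2 * Fintype.card κ := by
  have := he.1.comp (Sum.map f f) (Sum.map_injective.2 ⟨hf, hf⟩)
  rw [Sum.elim_comp_map] at this
  rw [quaternionicSpan_range, two_mul, ← Fintype.card_sum]
  exact finrank_span_eq_card this

def basis (he : IsQuaternionicBasis J e) : Basis (ι ⊕ ι) ℂ V :=
  Basis.mk he.1 (by rw [← quaternionicSpan_range, he.2])

theorem basis_apply (he : IsQuaternionicBasis J e) (i : ι ⊕ ι) :
    he.basis i = Sum.elim e (J ∘ e) i :=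
  Basis.mk_apply _ _ _

theorem exists_linearEquiv (hJ : IsQuaternionicStructure J) {e' : ι → V}
    (he : IsQuaternionicBasis J e) (he' : IsQuaternionicBasis J e') :
    ∃ φ : V ≃ₗ[ℂ] V, (∀ v, φ (J v) = J (φ v)) ∧ ∀ i, φ (e i) = e' i := by
  let φ := he.basis.equiv he'.basis (Equiv.refl _)
  have hφ : ∀ i, φ (Sum.elim e (J ∘ e) i) = Sum.elim e' (J ∘ e') i := fun i => by
    rw [← he.basis_apply, ← he'.basis_apply, Basis.equiv_apply, Equiv.refl_apply]
  have hφe (i : ι) : φ (e i) = e' i := hφ (.inl i)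
  have hφJe (i : ι) : φ (J (e i)) = J (e' i) := hφ (.inr i)
  refine ⟨φ, fun v => ?_, hφe⟩
  have : (φ : V →ₗ[ℂ] V).comp J = J.comp (φ : V →ₗ[ℂ] V) := by
    refine he.basis.ext fun i => ?_
    rcases i with i | i
    · simp [basis_apply, hφe, hφJe]
    · simp [basis_apply, hJ (e i), hJ (e' i), hφe, hφJe]
  exact LinearMap.congr_fun this v

end IsQuaternionicBasis

def quaternionicRank (J : V →ₗ⋆[ℂ] V) (A : Submodule ℂ V) : ℕ :=
  finrank ℂ ↥(A ⊓ A.map J)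

section QuaternionicRank

variable {J : V →ₗ⋆[ℂ] V}

theorem IsQuaternionicStructure.quaternionicRank_add_finrank [FiniteDimensional ℂ V]
    (hJ : IsQuaternionicStructure J) (A : Submodule ℂ V) :
    quaternionicRank J A + finrank ℂ (quaternionicSpan J A) = 2 * finrank ℂ A := by
  have := finrank_sup_add_finrank_inf_eq A (A.map J)
  rw [hJ.finrank_map] at this
  rw [quaternionicRank, quaternionicSpan_coe]
  omega

theorem quaternionicRank_le [FiniteDimensional ℂ V] (A : Submodule ℂ V) :
    quaternionicRank J A ≤ finrank ℂ A :=
  finrank_mono inf_le_left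

theorem quaternionicRank_map {φ : V ≃ₗ[ℂ] V} (hφ : ∀ v, φ (J v) = J (φ v)) (A : Submodule ℂ V) :
    quaternionicRank J (A.map (φ : V →ₗ[ℂ] V)) = quaternionicRank J A := by
  have : (A.map J).map (φ : V →ₗ[ℂ] V) = (A.map (φ : V →ₗ[ℂ] V)).map J := by
    rw [← map_comp, ← map_comp]
    congr 1
    exact LinearMap.ext hφ
  rw [quaternionicRank, quaternionicRank, ← this, ← Submodule.map_inf _ φ.injective,
    LinearEquiv.finrank_map_eq]

end QuaternionicRank

def modelSubspace (J : V →ₗ⋆[ℂ] V) {ι κ : Type*} (c : ι → V) (d : κ → V) : Submodule ℂ V :=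
  quaternionicSpan J (Set.range c) ⊔ span ℂ (Set.range d)

section ModelSubspace

variable {J : V →ₗ⋆[ℂ] V} {ι κ ν : Type*} {c : ι → V} {d : κ → V} {u : ν → V}

theorem map_modelSubspace {φ : V →ₗ[ℂ] V} (hφ : ∀ v, φ (J v) = J (φ v)) :
    (modelSubspace J c d).map φ = modelSubspace J (φ ∘ c) (φ ∘ d) := by
  rw [modelSubspace, Submodule.map_sup, map_quaternionicSpan hφ, map_span, ← Set.range_comp,
    ← Set.range_comp]
  rfl

theorem IsQuaternionicBasis.finrank_modelSubspace [Fintype ι] [Fintype κ]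
    (he : IsQuaternionicBasis J (Sum.elim (Sum.elim c d) u)) :
    finrank ℂ (modelSubspace J c d) = 2 * Fintype.card ι + Fintype.card κ := by
  let g : (ι ⊕ ι) ⊕ κ → ((ι ⊕ κ) ⊕ ν) ⊕ ((ι ⊕ κ) ⊕ ν) :=
    Sum.elim (Sum.elim (.inl ∘ .inl ∘ .inl) (.inr ∘ .inl ∘ .inl)) (.inl ∘ .inl ∘ .inr)
  have hg : Function.Injective g := by
    rintro ((a | a) | a) ((b | b) | b) h <;> simp_all [g]
  have hli := he.1.comp g hg
  have hEg : Sum.elim (Sum.elim (Sum.elim c d) u) (J ∘ Sum.elim (Sum.elim c d) u) ∘ g =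
      Sum.elim (Sum.elim c (J ∘ c)) d := by
    funext x
    rcases x with (a | a) | a <;> rfl
  rw [hEg] at hli
  rw [modelSubspace, quaternionicSpan_range, ← span_union, ← Set.Sum.elim_range,
    finrank_span_eq_card hli, Fintype.card_sum, Fintype.card_sum, two_mul]

theorem IsQuaternionicBasis.quaternionicRank_modelSubspace [FiniteDimensional ℂ V] [Fintype ι]
    [Fintype κ]
    (hJ : IsQuaternionicStructure J) (he : IsQuaternionicBasis J (Sum.elim (Sum.elim c d) u)) :
    quaternionicRank J (modelSubspace J c d) = 2 * Fintype.card ι := by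
  have hspan : quaternionicSpan J (modelSubspace J c d) =
      quaternionicSpan J (Set.range (Sum.elim c d)) := by
    rw [Set.Sum.elim_range]
    apply le_antisymm
    · refine quaternionicSpan_le (hJ.map_quaternionicSpan_le _)
        (SetLike.coe_subset_coe.2 (sup_le ?_ ?_))
      · exact quaternionicSpan_mono Set.subset_union_left
      · exact span_le.2 (Set.subset_union_right.trans (subset_quaternionicSpan _))
    · refine quaternionicSpan_mono (Set.union_subset ?_ ?_)
      · exact (subset_quaternionicSpan _).trans (SetLike.coe_subset_coe.2 le_sup_left)
      · exact subset_span.trans (SetLike.coe_subset_coe.2 le_sup_right)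
  have h1 := hJ.quaternionicRank_add_finrank (modelSubspace J c d)
  have h2 := he.finrank_quaternionicSpan_comp (f := Sum.inl) Sum.inl_injective
  rw [hspan, he.finrank_modelSubspace] at h1
  rw [Sum.elim_comp_inl, Fintype.card_sum] at h2
  omega

end ModelSubspace

theorem IsQuaternionicStructure.exists_modelSubspace_eq [FiniteDimensional ℂ V]
    {J : V →ₗ⋆[ℂ] V} (hJ : IsQuaternionicStructure J) (A : Submodule ℂ V) :
    ∃ (m s r : ℕ) (c : Fin m → V) (d : Fin s → V) (u : Fin r → V),
      IsQuaternionicBasis J (Sum.elim (Sum.elim c d) u) ∧ modelSubspace J c d = A := by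
  set W := A ⊓ A.map J
  have hW : W.map J ≤ W := (map_inf_le _).trans (by rw [hJ.map_map_eq, inf_comm])
  have hWq : quaternionicSpan J W = W := by rw [quaternionicSpan_coe, sup_eq_left.2 hW]
  have hWA : W ⊔ quaternionicSpan J A = quaternionicSpan J A :=
    sup_eq_right.2 (inf_le_left.trans (subset_quaternionicSpan _))
  have hAV : quaternionicSpan J A ⊔ quaternionicSpan J Set.univ = ⊤ := by
    rw [quaternionicSpan_univ, sup_top_eq]
  obtain ⟨m, c, -, hc, hcdim⟩ := hJ.exists_extension (W : Set V) (Y := ⊥) (by simp)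
  obtain ⟨s, d, hdA, hd, hddim⟩ := hJ.exists_extension (A : Set V) hW
  obtain ⟨r, u, -, hu, hudim⟩ :=
    hJ.exists_extension Set.univ (hJ.map_quaternionicSpan_le (A : Set V))
  rw [bot_sup_eq, bot_sup_eq, hWq] at hc
  rw [bot_sup_eq, hWq, finrank_bot, zero_add] at hcdim
  rw [hWA] at hd hddim
  rw [hAV] at hu hudim
  have he : IsQuaternionicBasis J (Sum.elim (Sum.elim c d) u) := by
    refine .of_quaternionicSpan_eq_top ?_ ?_
    · rw [Set.Sum.elim_range, Set.Sum.elim_range, quaternionicSpan_union, quaternionicSpan_union,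
        hc, hd, hu]
    · rw [finrank_top] at hudim
      simp only [Fintype.card_sum, Fintype.card_fin]
      omega
  refine ⟨m, s, r, c, d, u, he, eq_of_le_of_finrank_eq ?_ ?_⟩
  · exact sup_le (hc ▸ inf_le_left) (span_le.2 (Set.range_subset_iff.2 hdA))
  · have := hJ.quaternionicRank_add_finrank A
    rw [he.finrank_modelSubspace, Fintype.card_fin, Fintype.card_fin]
    change finrank ℂ W + _ = _ at this
    omega

theorem IsQuaternionicStructure.even_quaternionicRank [FiniteDimensional ℂ V] {J : V →ₗ⋆[ℂ] V}
    (hJ : IsQuaternionicStructure J) (A : Submodule ℂ V) : Even (quaternionicRank J A) := by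
  obtain ⟨m, s, r, c, d, u, he, rfl⟩ := hJ.exists_modelSubspace_eq A
  rw [he.quaternionicRank_modelSubspace hJ, Fintype.card_fin]
  exact even_two_mul m

theorem IsQuaternionicStructure.exists_linearEquiv_map_eq [FiniteDimensional ℂ V]
    {J : V →ₗ⋆[ℂ] V} (hJ : IsQuaternionicStructure J) {A B : Submodule ℂ V}
    (hfin : finrank ℂ A = finrank ℂ B) (hrank : quaternionicRank J A = quaternionicRank J B) :
    ∃ φ : V ≃ₗ[ℂ] V, (∀ v, φ (J v) = J (φ v)) ∧ A.map (φ : V →ₗ[ℂ] V) = B := by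
  obtain ⟨m, s, r, c, d, u, he, rfl⟩ := hJ.exists_modelSubspace_eq A
  obtain ⟨m', s', r', c', d', u', he', rfl⟩ := hJ.exists_modelSubspace_eq B
  have hcard := he.card.trans he'.card.symm
  rw [he.finrank_modelSubspace, he'.finrank_modelSubspace] at hfin
  rw [he.quaternionicRank_modelSubspace hJ, he'.quaternionicRank_modelSubspace hJ] at hrank
  simp only [Fintype.card_sum, Fintype.card_fin] at hfin hrank hcard
  obtain rfl : m = m' := by omega
  obtain rfl : s = s' := by omega
  obtain rfl : r = r' := by omega
  obtain ⟨φ, hφJ, hφe⟩ := he.exists_linearEquiv hJ he'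
  refine ⟨φ, hφJ, ?_⟩
  rw [map_modelSubspace (φ := (φ : V →ₗ[ℂ] V)) hφJ]
  congr 1 <;> funext i
  exacts [hφe (.inl (.inl i)), hφe (.inl (.inr i))]

theorem IsQuaternionicStructure.exists_quaternionicRank_eq [FiniteDimensional ℂ V]
    {J : V →ₗ⋆[ℂ] V} (hJ : IsQuaternionicStructure J) {n k m : ℕ} (hn : finrank ℂ V = 2 * n)
    (hmk : 2 * m ≤ k) (hkn : k ≤ n) :
    ∃ A : Submodule ℂ V, finrank ℂ A = k ∧ quaternionicRank J A = 2 * m := by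
  obtain ⟨N, e, -, he, hN⟩ := hJ.exists_extension Set.univ (Y := ⊥) (by simp)
  rw [bot_sup_eq, bot_sup_eq, quaternionicSpan_univ] at he
  rw [bot_sup_eq, quaternionicSpan_univ, finrank_bot, finrank_top] at hN
  have he : IsQuaternionicBasis J e := .of_quaternionicSpan_eq_top he (by simpa using hN)
  let σ : (Fin m ⊕ Fin (k - 2 * m)) ⊕ Fin (n - (k - m)) ≃ Fin N :=
    Fintype.equivOfCardEq (by simp only [Fintype.card_sum, Fintype.card_fin]; omega)
  have he' := he.comp_equiv σ
  rw [← Sum.elim_comp_inl_inr (e ∘ σ), ← Sum.elim_comp_inl_inr ((e ∘ σ) ∘ Sum.inl)] at he'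
  refine ⟨_, he'.finrank_modelSubspace.trans ?_, (he'.quaternionicRank_modelSubspace hJ).trans ?_⟩
  · simp only [Fintype.card_fin]
    omega
  · rw [Fintype.card_fin]

theorem LinearMap.det_restrict_span_of_eigenvectors {R M ι : Type*} [CommRing R]
    [AddCommGroup M] [Module R M] [Fintype ι] [DecidableEq ι] {v : ι → M}
    (hv : LinearIndependent R v) {f : M →ₗ[R] M} {μ : ι → R} (hf : ∀ i, f (v i) = μ i • v i)
    (h : span R (Set.range v) ≤ (span R (Set.range v)).comap f) :
    LinearMap.det (f.restrict h) = ∏ i, μ i := by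
  have : LinearMap.toMatrix (Basis.span hv) (Basis.span hv) (f.restrict h) = Matrix.diagonal μ := by
    ext i j
    have hj : f.restrict h (Basis.span hv j) = μ j • Basis.span hv j :=
      Subtype.ext (by simp [Basis.span_apply, hf])
    rw [LinearMap.toMatrix_apply, hj, map_smul, Basis.repr_self, Matrix.diagonal_apply]
    by_cases hij : i = j <;> simp [hij]
  rw [← LinearMap.det_toMatrix (Basis.span hv), this, Matrix.det_diagonal]

/-- An eigenvector `v` of `φ` spans with `J v` a `φ`-stable plane on which `det φ = |μ|²`;
induct on the quotient. -/
theorem IsQuaternionicStructure.exists_det_eq_ofReal_nonneg [FiniteDimensional ℂ V]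
    {J : V →ₗ⋆[ℂ] V} (hJ : IsQuaternionicStructure J) (φ : V →ₗ[ℂ] V)
    (hφ : ∀ v, φ (J v) = J (φ v)) : ∃ r : ℝ, 0 ≤ r ∧ LinearMap.det φ = r := by
  induction hN : finrank ℂ V using Nat.strong_induction_on generalizing V with
  | _ N ih =>
  rcases subsingleton_or_nontrivial V with hV | hV
  · exact ⟨1, zero_le_one, by simp [LinearMap.det_eq_one_of_subsingleton]⟩
  obtain ⟨μ, hμ⟩ := Module.End.exists_eigenvalue φ
  obtain ⟨v, hv⟩ := hμ.exists_hasEigenvector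
  have hφv : φ v = μ • v := hv.apply_eq_smul
  have hφJv : φ (J v) = starRingEnd ℂ μ • J v := by rw [hφ, hφv, map_smulₛₗ]
  have hli := hJ.linearIndependent_pair hv.2
  set U := span ℂ (Set.range ![v, J v])
  have hUJ : U ≤ U.comap J := by
    rw [← map_le_iff_le_comap]
    simpa only [quaternionicSpan_singleton] using hJ.map_quaternionicSpan_le {v}
  have hφU : U ≤ U.comap φ := by
    rw [span_le]
    rintro _ ⟨i, rfl⟩
    fin_cases i
    · simpa [hφv] using U.smul_mem μ (subset_span ⟨0, rfl⟩)
    · simpa [hφJv] using U.smul_mem (starRingEnd ℂ μ) (subset_span ⟨1, rfl⟩)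
  have hdim := U.finrank_quotient_add_finrank
  rw [finrank_span_eq_card hli, Fintype.card_fin] at hdim
  obtain ⟨r, hr, hdet⟩ := ih _ (by omega) (hJ.mapQ hUJ) (U.mapQ U φ hφU) (fun z => by
    induction z using Submodule.Quotient.induction_on
    simp [hφ]) rfl
  refine ⟨Complex.normSq μ * r, mul_nonneg (Complex.normSq_nonneg μ) hr, ?_⟩
  rw [LinearMap.det_eq_det_mul_det U φ hφU, hdet,
    LinearMap.det_restrict_span_of_eigenvectors hli (μ := ![μ, starRingEnd ℂ μ]) ?_]
  · simp [Complex.mul_conj]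
  · intro i
    fin_cases i <;> simp [hφv, hφJv]

theorem IsQuaternionicStructure.exists_det_eq_one [FiniteDimensional ℂ V] {J : V →ₗ⋆[ℂ] V}
    (hJ : IsQuaternionicStructure J) (φ : V ≃ₗ[ℂ] V) (hφ : ∀ v, φ (J v) = J (φ v)) :
    ∃ ψ : V ≃ₗ[ℂ] V, (∀ v, ψ (J v) = J (ψ v)) ∧ LinearMap.det (ψ : V →ₗ[ℂ] V) = 1 ∧
      ∀ p : Submodule ℂ V, p.map (ψ : V →ₗ[ℂ] V) = p.map (φ : V →ₗ[ℂ] V) := by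
  obtain ⟨r, hr, hdet⟩ := hJ.exists_det_eq_ofReal_nonneg (φ : V →ₗ[ℂ] V) hφ
  have hr0 : r ≠ 0 := by
    rintro rfl
    simpa [hdet] using φ.isUnit_det'
  by_cases hN : finrank ℂ V = 0
  · exact ⟨φ, hφ, LinearMap.det_eq_one_of_finrank_eq_zero hN _, fun _ => rfl⟩
  -- `J` commutes only with real scalars, and these suffice because `det φ > 0`
  set c : ℝ := (r ^ (finrank ℂ V : ℝ)⁻¹)⁻¹
  have hc : c ^ finrank ℂ V * r = 1 := by
    rw [inv_pow, Real.rpow_inv_natCast_pow hr hN, inv_mul_cancel₀ hr0]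
  have hc0 : (c : ℂ) ≠ 0 := by
    rintro h
    simp [Complex.ofReal_eq_zero.1 h, hN] at hc
  let ψ := φ.trans (LinearEquiv.smulOfNeZero ℂ V c hc0)
  have hψ : (ψ : V →ₗ[ℂ] V) = (c : ℂ) • (φ : V →ₗ[ℂ] V) := LinearMap.ext fun _ => rfl
  refine ⟨ψ, fun v => ?_, ?_, fun p => by rw [hψ, Submodule.map_smul _ _ _ hc0]⟩
  · change (c : ℂ) • φ (J v) = J ((c : ℂ) • φ v)
    rw [hφ, map_smulₛₗ, Complex.conj_ofReal]
  · rw [hψ, LinearMap.det_smul, hdet, ← Complex.ofReal_pow, ← Complex.ofReal_mul, hc,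
      Complex.ofReal_one]

theorem SameSLHOrbit.quaternionicRank_eq {J : V →ₗ⋆[ℂ] V} {k : ℕ}
    {A B : {U : Submodule ℂ V // finrank ℂ U = k}} (h : SameSLHOrbit J k A B) :
    quaternionicRank J A.1 = quaternionicRank J B.1 := by
  obtain ⟨φ, hφ, -, hAB⟩ := h
  rw [← hAB, quaternionicRank_map hφ]

theorem IsQuaternionicStructure.sameSLHOrbit_of_quaternionicRank_eq [FiniteDimensional ℂ V]
    {J : V →ₗ⋆[ℂ] V} (hJ : IsQuaternionicStructure J) {k : ℕ}
    {A B : {U : Submodule ℂ V // finrank ℂ U = k}}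
    (h : quaternionicRank J A.1 = quaternionicRank J B.1) : SameSLHOrbit J k A B := by
  obtain ⟨φ, hφJ, hφA⟩ := hJ.exists_linearEquiv_map_eq (A.2.trans B.2.symm) h
  obtain ⟨ψ, hψJ, hψdet, hψφ⟩ := hJ.exists_det_eq_one φ hφJ
  exact ⟨ψ, hψJ, hψdet, (hψφ _).trans hφA⟩

theorem card_SLH_orbits_grassmannian
    [FiniteDimensional ℂ V] (n k : ℕ) (hn : finrank ℂ V = 2 * n)
    (J : V →ₗ⋆[ℂ] V) (hJ : IsQuaternionicStructure J) (hk : k ≤ n) :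
    Nat.card (Quot (SameSLHOrbit J k (V := V))) = k / 2 + 1 := by
  have hmodel (m : Fin (k / 2 + 1)) :
      ∃ A : {U : Submodule ℂ V // finrank ℂ U = k}, quaternionicRank J A.1 = 2 * m := by
    obtain ⟨A, hA, hrank⟩ := hJ.exists_quaternionicRank_eq hn (m := m) (by omega) hk
    exact ⟨⟨A, hA⟩, hrank⟩
  choose A hA using hmodel
  let orbit (m : Fin (k / 2 + 1)) : Quot (SameSLHOrbit J k) := Quot.mk _ (A m)
  have hinj : Function.Injective orbit := fun m m' h => by
    have := congrArg (Quot.lift (fun B => quaternionicRank J B.1)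
      fun _ _ => SameSLHOrbit.quaternionicRank_eq) h
    simp only [orbit, hA] at this
    exact Fin.ext (by omega)
  have hsurj : Function.Surjective orbit := by
    rintro ⟨B⟩
    obtain ⟨m, hm⟩ := hJ.even_quaternionicRank B.1
    have := B.2 ▸ quaternionicRank_le (J := J) B.1
    refine ⟨⟨m, by omega⟩, Quot.sound (hJ.sameSLHOrbit_of_quaternionicRank_eq ?_)⟩
    rw [hA, hm, two_mul]
  rw [← Nat.card_eq_of_bijective orbit ⟨hinj, hsurj⟩, Nat.card_eq_fintype_card, Fintype.card_fin]
end
end
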